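/- arXiv:math/0502110 — 8 statements merged into one kernel-verified Lean document; each statement's English description precedes it below -/
import Mathlib

section
/- For an ideal 𝔞 of a Noetherian local ring (R, 𝔫) with infinite residue field and an ideal 𝔟 ⊆ 𝔞, one has 𝔟𝔞ⁿ = 𝔞ⁿ⁺¹ if and only if the ideal of the fiber cone R/𝔫 ⊗ Gr_𝔞(R) generated by the image of 𝔟 contains the (n+1)-st power of the irrelevant ideal of the fiber cone. -/
open IsLocalRing

/-- Northcott–Rees: for ideals `𝔟 ⊆ 𝔞` of a Noetherian local ring `(R, 𝔫)` with
infinite residue field, `𝔟 𝔞ⁿ = 𝔞ⁿ⁺¹` holds iff the ideal of the fiber cone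
`R/𝔫 ⊗ Gr_𝔞(R) = ⊕_{i≥0} 𝔞^i/𝔫𝔞^i` generated by the image of `𝔟` contains the
`(n+1)`-st power of the irrelevant ideal.  Since the degree-`i` component of the
latter is `𝔞^i/𝔫𝔞^i` for `i ≥ n+1`, and the degree-`i` component of the former is
`(𝔟𝔞^{i-1} + 𝔫𝔞^i)/𝔫𝔞^i`, this containment is expressed componentwise. -/
theorem reduction_iff_fiberCone_contains_power {R : Type*} [CommRing R] [IsNoetherianRing R]
    [IsLocalRing R] [Infinite (ResidueField R)]
    (a b : Ideal R) (hba : b ≤ a) (n : ℕ) :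
    b * a ^ n = a ^ (n + 1) ↔
      ∀ i : ℕ, n + 1 ≤ i →
        a ^ i ≤ b * a ^ (i - 1) + maximalIdeal R * a ^ i := by
  constructor
  · intro h i hi
    obtain ⟨k, rfl⟩ := Nat.exists_eq_add_of_le hi
    have : a ^ (n + 1 + k) = b * a ^ (n + 1 + k - 1) := by
      have : n + 1 + k - 1 = n + k := by omega
      rw [this, pow_add, ← h, pow_add]
      ring
    rw [this]
    exact le_add_of_le_of_nonneg le_rfl bot_le
  · intro h
    refine le_antisymm (Ideal.mul_le.2 fun r hr s hs => ?_) ?_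
    · rw [pow_succ']
      exact Ideal.mul_mem_mul (hba hr) hs
    · have key := h (n + 1) le_rfl
      simp only [Nat.add_sub_cancel] at key
      have := Submodule.le_of_le_smul_of_le_jacobson_bot
        (N := (b * a ^ n : Ideal R)) (N' := (a ^ (n + 1) : Ideal R))
        (IsNoetherian.noetherian _)
        (by rw [IsLocalRing.jacobson_eq_maximalIdeal ⊥ bot_ne_top])
        (by rwa [Ideal.smul_eq_mul, ← Submodule.add_eq_sup])
      exact this
end

section
/- Let P be a finite poset and M the submonoid of ℕ^(P ∪ {-∞}) consisting of tuples (n_α) such that n_α ≥ n_β whenever α ≤ β (where -∞ is a new minimum element adjoined to P). Then the set of lattice points in the interior of the cone ℝ_{≥0} M intersected with M is exactly {(n_α) : n_α > 0 for all α, and n_α > n_β whenever α < β}. -/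
open Finset

variable (P : Type*) [PartialOrder P] [Fintype P]

/-- The affine semigroup `M` of the Hibi ring of a finite poset `P`:
lattice points `(n_α)_{α ∈ P ∪ {-∞}}` (realized inside `ℝ^(P ∪ {-∞})`) with
`n_α ≥ n_β` whenever `α ≤ β`.  Here `P ∪ {-∞}` is `WithBot P`. -/
def hibiLatticePoints : Set (WithBot P → ℝ) :=
  {f | (∀ a : WithBot P, ∃ n : ℕ, f a = n) ∧
    ∀ a b : WithBot P, a ≤ b → f b ≤ f a}

/-- The cone `ℝ_{≥0} M` generated by `M` in `ℝ^(P ∪ {-∞})`: all finite nonnegative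
real combinations of elements of `M`. -/
def hibiCone : Set (WithBot P → ℝ) :=
  {x | ∃ (s : Finset (WithBot P → ℝ)) (c : (WithBot P → ℝ) → ℝ),
    (↑s : Set (WithBot P → ℝ)) ⊆ hibiLatticePoints P ∧ (∀ v, 0 ≤ c v) ∧
    x = ∑ v ∈ s, c v • v}

variable {P}

instance : Fintype (WithBot P) := inferInstanceAs (Fintype (Option P))

set_option linter.unusedSectionVars false

lemma zero_mem_hibiCone : (0 : WithBot P → ℝ) ∈ hibiCone P :=
  ⟨∅, fun _ => 0, by simp, fun _ => le_refl 0, by simp⟩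

lemma add_mem_hibiCone {x y : WithBot P → ℝ} (hx : x ∈ hibiCone P) (hy : y ∈ hibiCone P) :
    x + y ∈ hibiCone P := by
  classical
  obtain ⟨s₁, c₁, hs₁, hc₁, rfl⟩ := hx
  obtain ⟨s₂, c₂, hs₂, hc₂, rfl⟩ := hy
  refine ⟨s₁ ∪ s₂, fun v => (if v ∈ s₁ then c₁ v else 0) + (if v ∈ s₂ then c₂ v else 0),
    ?_, ?_, ?_⟩
  · intro v hv
    simp only [coe_union, Set.mem_union, mem_coe] at hv
    rcases hv with h | h
    · exact hs₁ h
    · exact hs₂ h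
  · intro v
    have h1 : (0:ℝ) ≤ if v ∈ s₁ then c₁ v else 0 := by
      split_ifs with h
      · exact hc₁ v
      · exact le_rfl
    have h2 : (0:ℝ) ≤ if v ∈ s₂ then c₂ v else 0 := by
      split_ifs with h
      · exact hc₂ v
      · exact le_rfl
    exact add_nonneg h1 h2
  · have key : ∀ (s t : Finset (WithBot P → ℝ)) (c : (WithBot P → ℝ) → ℝ), t ⊆ s →
        ∑ v ∈ s, (if v ∈ t then c v else 0) • v = ∑ v ∈ t, c v • v := by
      intro s t c hts
      rw [← Finset.sum_subset hts]
      · exact Finset.sum_congr rfl fun v hv => by rw [if_pos hv]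
      · intro v _ hv
        rw [if_neg hv, zero_smul]
    have e : ∀ v, ((if v ∈ s₁ then c₁ v else 0) + (if v ∈ s₂ then c₂ v else 0)) • v
        = (if v ∈ s₁ then c₁ v else 0) • v + (if v ∈ s₂ then c₂ v else 0) • v :=
      fun v => add_smul _ _ v
    calc ∑ v ∈ s₁, c₁ v • v + ∑ v ∈ s₂, c₂ v • v
        = ∑ v ∈ s₁ ∪ s₂, (if v ∈ s₁ then c₁ v else 0) • v
          + ∑ v ∈ s₁ ∪ s₂, (if v ∈ s₂ then c₂ v else 0) • v := by
          rw [key _ _ _ Finset.subset_union_left, key _ _ _ Finset.subset_union_right]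
      _ = ∑ v ∈ s₁ ∪ s₂,
          ((if v ∈ s₁ then c₁ v else 0) + (if v ∈ s₂ then c₂ v else 0)) • v := by
          rw [← Finset.sum_add_distrib]
          exact Finset.sum_congr rfl fun v _ => (e v).symm

lemma smul_mem_hibiCone {v : WithBot P → ℝ} (hv : v ∈ hibiLatticePoints P) {m : ℝ}
    (hm : 0 ≤ m) : m • v ∈ hibiCone P :=
  ⟨{v}, fun _ => m, by simpa using hv, fun _ => hm, by simp⟩

/-- Layer-cake decomposition: every nonnegative order-reversing tuple lies in the cone. -/
lemma mem_hibiCone_of_aux : ∀ (n : ℕ) (x : WithBot P → ℝ),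
    (univ.filter fun a => x a ≠ 0).card = n →
    (∀ a, 0 ≤ x a) → (∀ a b, a ≤ b → x b ≤ x a) → x ∈ hibiCone P := by
  intro n
  induction n using Nat.strong_induction_on with
  | _ n ih =>
    intro x hcard h0 hmono
    classical
    by_cases hS : (univ.filter fun a => x a ≠ 0) = ∅
    · have hx0 : x = 0 := by
        funext a
        simp only [Pi.zero_apply]
        by_contra h
        have : a ∈ univ.filter fun a => x a ≠ 0 := Finset.mem_filter.2 ⟨mem_univ a, h⟩
        simp [hS] at this
      rw [hx0]; exact zero_mem_hibiCone
    · have hSne : (univ.filter fun a => x a ≠ 0).Nonempty :=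
        Finset.nonempty_iff_ne_empty.2 hS
      set S := univ.filter fun a => x a ≠ 0 with hSdef
      set m := S.inf' hSne x with hm
      obtain ⟨a₀, ha₀S, ha₀⟩ := Finset.exists_mem_eq_inf' hSne x
      have ha₀ne : x a₀ ≠ 0 := (Finset.mem_filter.1 ha₀S).2
      have hmpos : 0 < m := by
        rw [hm, ha₀]
        exact lt_of_le_of_ne (h0 a₀) (Ne.symm ha₀ne)
      have hmle : ∀ a, x a ≠ 0 → m ≤ x a := fun a h =>
        Finset.inf'_le x (Finset.mem_filter.2 ⟨mem_univ a, h⟩)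
      set χ : WithBot P → ℝ := fun a => if x a ≠ 0 then 1 else 0 with hχ
      set x' : WithBot P → ℝ := fun a => x a - m * χ a with hx'
      have hχlat : χ ∈ hibiLatticePoints P := by
        constructor
        · intro a
          by_cases h : x a = 0
          · exact ⟨0, by simp [hχ, h]⟩
          · exact ⟨1, by simp [hχ, h]⟩
        · intro a b hab
          by_cases hb : x b = 0
          · simp only [hχ, hb, ne_eq, not_true_eq_false, if_false]
            split <;> norm_num
          · have hbpos : 0 < x b := lt_of_le_of_ne (h0 b) (Ne.symm hb)
            have ha : x a ≠ 0 := by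
              have := hmono a b hab
              exact ne_of_gt (lt_of_lt_of_le hbpos this)
            simp [hχ, ha, hb]
      have hx'0 : ∀ a, 0 ≤ x' a := by
        intro a
        by_cases h : x a = 0
        · simp [hx', hχ, h]
        · simp only [hx', hχ, h, ne_eq, not_false_eq_true, if_true, mul_one]
          linarith [hmle a h]
      have hx'mono : ∀ a b, a ≤ b → x' b ≤ x' a := by
        intro a b hab
        by_cases hb : x b = 0
        · have : x' b = 0 := by simp [hx', hχ, hb]
          rw [this]; exact hx'0 a
        · have hbpos : 0 < x b := lt_of_le_of_ne (h0 b) (Ne.symm hb)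
          have ha : x a ≠ 0 := ne_of_gt (lt_of_lt_of_le hbpos (hmono a b hab))
          simp only [hx', hχ, ha, hb, ne_eq, not_false_eq_true, if_true, mul_one]
          linarith [hmono a b hab]
      have hsubset : (univ.filter fun a => x' a ≠ 0) ⊆ S := by
        intro a ha
        have hane : x' a ≠ 0 := (Finset.mem_filter.1 ha).2
        refine Finset.mem_filter.2 ⟨mem_univ a, ?_⟩
        intro h
        apply hane
        simp [hx', hχ, h]
      have hsub : (univ.filter fun a => x' a ≠ 0) ⊂ S := by
        refine (Finset.ssubset_iff_of_subset hsubset).2 ⟨a₀, ha₀S, ?_⟩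
        intro hmem
        have hz : x' a₀ = 0 := by
          simp only [hx', hχ, ha₀ne, ne_eq, not_false_eq_true, if_true, mul_one]
          rw [hm, ha₀]; ring
        exact (Finset.mem_filter.1 hmem).2 hz
      have hltcard : (univ.filter fun a => x' a ≠ 0).card < n := by
        rw [← hcard]
        exact Finset.card_lt_card hsub
      have hx'mem : x' ∈ hibiCone P := ih _ hltcard x' rfl hx'0 hx'mono
      have hxeq : x = m • χ + x' := by
        funext a
        simp only [hx', hχ, Pi.add_apply, Pi.smul_apply, smul_eq_mul]
        ring
      rw [hxeq]
      exact add_mem_hibiCone (smul_mem_hibiCone hχlat hmpos.le) hx'mem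

lemma mem_hibiCone_of {x : WithBot P → ℝ} (h0 : ∀ a, 0 ≤ x a)
    (hmono : ∀ a b, a ≤ b → x b ≤ x a) : x ∈ hibiCone P :=
  mem_hibiCone_of_aux _ x rfl h0 hmono

lemma hibiCone_nonneg {x : WithBot P → ℝ} (hx : x ∈ hibiCone P) :
    (∀ a, 0 ≤ x a) ∧ ∀ a b, a ≤ b → x b ≤ x a := by
  obtain ⟨s, c, hs, hc, rfl⟩ := hx
  have hv0 : ∀ v ∈ s, ∀ a, (0:ℝ) ≤ v a := by
    intro v hv a
    obtain ⟨nn, hnn⟩ := (hs hv).1 a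
    rw [hnn]; exact Nat.cast_nonneg nn
  constructor
  · intro a
    rw [Finset.sum_apply]
    refine Finset.sum_nonneg fun v hv => ?_
    simp only [Pi.smul_apply, smul_eq_mul]
    exact mul_nonneg (hc v) (hv0 v hv a)
  · intro a b hab
    rw [Finset.sum_apply, Finset.sum_apply]
    refine Finset.sum_le_sum fun v hv => ?_
    simp only [Pi.smul_apply, smul_eq_mul]
    exact mul_le_mul_of_nonneg_left ((hs hv).2 a b hab) (hc v)

/-- The candidate interior: all coordinates positive, strictly order-reversing. -/
lemma isOpen_strict : IsOpen {f : WithBot P → ℝ |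
    (∀ a : WithBot P, 0 < f a) ∧ ∀ a b : WithBot P, a < b → f b < f a} := by
  have heq : {f : WithBot P → ℝ | (∀ a : WithBot P, 0 < f a) ∧
      ∀ a b : WithBot P, a < b → f b < f a}
      = (⋂ a : WithBot P, {f : WithBot P → ℝ | 0 < f a}) ∩
        ⋂ a : WithBot P, ⋂ b : WithBot P, {f : WithBot P → ℝ | a < b → f b < f a} := by
    ext f
    simp [Set.mem_iInter]
  rw [heq]
  refine IsOpen.inter ?_ ?_
  · exact isOpen_iInter_of_finite fun a => isOpen_lt continuous_const (continuous_apply a)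
  · refine isOpen_iInter_of_finite fun a => isOpen_iInter_of_finite fun b => ?_
    by_cases h : a < b
    · have : {f : WithBot P → ℝ | a < b → f b < f a} = {f | f b < f a} := by
        ext f; simp [h]
      rw [this]
      exact isOpen_lt (continuous_apply b) (continuous_apply a)
    · have : {f : WithBot P → ℝ | a < b → f b < f a} = Set.univ := by
        ext f; simp [h]
      rw [this]
      exact isOpen_univ

lemma interior_hibiCone_subset : interior (hibiCone P) ⊆
    {f : WithBot P → ℝ | (∀ a : WithBot P, 0 < f a) ∧
      ∀ a b : WithBot P, a < b → f b < f a} := by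
  classical
  intro x hx
  obtain ⟨ε, hε, hball⟩ := Metric.isOpen_iff.1 isOpen_interior x hx
  have hball' : Metric.ball x ε ⊆ hibiCone P := hball.trans interior_subset
  constructor
  · intro a
    set y : WithBot P → ℝ := Function.update x a (x a - ε / 2) with hy
    have hmem : y ∈ Metric.ball x ε := by
      rw [Metric.mem_ball]
      have : dist y x ≤ ε / 2 := by
        rw [dist_pi_le_iff (by positivity)]
        intro i
        by_cases h : i = a
        · subst h
          simp only [hy, Function.update_self, Real.dist_eq]
          have he : x i - ε / 2 - x i = -(ε / 2) := by ring
          rw [he, abs_neg, abs_of_pos (by positivity)]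
        · simp only [hy, Function.update_of_ne h, dist_self]
          positivity
      linarith
    have := (hibiCone_nonneg (hball' hmem)).1 a
    rw [hy, Function.update_self] at this
    linarith
  · intro a b hab
    set y : WithBot P → ℝ := Function.update x b (x b + ε / 2) with hy
    have hmem : y ∈ Metric.ball x ε := by
      rw [Metric.mem_ball]
      have : dist y x ≤ ε / 2 := by
        rw [dist_pi_le_iff (by positivity)]
        intro i
        by_cases h : i = b
        · subst h
          simp only [hy, Function.update_self, Real.dist_eq]
          have he : x i + ε / 2 - x i = ε / 2 := by ring
          rw [he, abs_of_pos (by positivity)]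
        · simp only [hy, Function.update_of_ne h, dist_self]
          positivity
      linarith
    have hle := (hibiCone_nonneg (hball' hmem)).2 a b hab.le
    rw [hy, Function.update_self, Function.update_of_ne (ne_of_lt hab)] at hle
    linarith

/-- The lattice points of `M` in the interior of the cone `ℝ_{≥0} M` are exactly the
tuples that are everywhere positive and strictly order-reversing. -/
theorem interior_hibiCone_inter :
    interior (hibiCone P) ∩ hibiLatticePoints P =
      {f : WithBot P → ℝ | (∀ a : WithBot P, ∃ n : ℕ, f a = (n : ℝ)) ∧ (∀ a : WithBot P, 0 < f a) ∧
        ∀ a b : WithBot P, a < b → f b < f a} := by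
  ext f
  constructor
  · rintro ⟨hint, hlat⟩
    have hO := interior_hibiCone_subset hint
    exact ⟨hlat.1, hO.1, hO.2⟩
  · rintro ⟨hnat, hpos, hstrict⟩
    have hmono : ∀ a b : WithBot P, a ≤ b → f b ≤ f a := by
      intro a b hab
      rcases lt_or_eq_of_le hab with h | h
      · exact (hstrict a b h).le
      · rw [h]
    refine ⟨?_, hnat, hmono⟩
    have hOsub : {g : WithBot P → ℝ | (∀ a : WithBot P, 0 < g a) ∧
        ∀ a b : WithBot P, a < b → g b < g a} ⊆ hibiCone P := by
      intro g ⟨hg1, hg2⟩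
      refine mem_hibiCone_of (fun a => (hg1 a).le) ?_
      intro a b hab
      rcases lt_or_eq_of_le hab with h | h
      · exact (hg2 a b h).le
      · rw [h]
    exact interior_maximal hOsub isOpen_strict ⟨hpos, hstrict⟩
end

section
/- Let u ≥ k ≥ 1 and a₁ < a₂ < ⋯ < a_k be integers with aᵢ ≤ u - k + i for all i. Consider the distributive lattice D₁ = {[c₁,…,c_k] : 1 ≤ c₁ < ⋯ < c_k ≤ u, c_i ≥ a_i for all i} ordered componentwise. Then [c₁,…,c_k] is join-irreducible in D₁ if and only if there is exactly one index i with c_i > a_i and c_i > c_{i-1} + 1 (where the condition c₁ > c₀ + 1 is deemed always true). -/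
/-- Membership in the distributive lattice `D₁` of strictly increasing `k`-tuples
`(c₁,…,c_k)` with `1 ≤ cᵢ ≤ u` and `cᵢ ≥ aᵢ`, ordered componentwise. -/
def memD1 {k : ℕ} (u : ℕ) (a c : Fin k → ℕ) : Prop :=
  StrictMono c ∧ (∀ i, 1 ≤ c i) ∧ (∀ i, c i ≤ u) ∧ ∀ i, a i ≤ c i

/-- Join-irreducibility in `D₁`: not the minimum `(a₁,…,a_k)` and not the join
(componentwise maximum) of two strictly smaller elements of `D₁`. -/
def joinIrredD1 {k : ℕ} (u : ℕ) (a c : Fin k → ℕ) : Prop :=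
  memD1 u a c ∧ c ≠ a ∧
    ∀ d e : Fin k → ℕ, memD1 u a d → memD1 u a e → c = d ⊔ e → c = d ∨ c = e

/-- The condition on the index `i`: `cᵢ > aᵢ` and `cᵢ > c_{i-1} + 1`, the latter
being deemed always true when `i` is the first index. -/
def specialIdx {k : ℕ} (a c : Fin k → ℕ) (i : Fin k) : Prop :=
  a i < c i ∧ ∀ j : Fin k, (j : ℕ) + 1 = (i : ℕ) → c j + 1 < c i

/-- Decrease `c` by one at index `i`. -/
def downAt {k : ℕ} (c : Fin k → ℕ) (i : Fin k) : Fin k → ℕ :=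
  Function.update c i (c i - 1)

lemma downAt_apply_ne {k : ℕ} (c : Fin k → ℕ) {i j : Fin k} (h : j ≠ i) :
    downAt c i j = c j := Function.update_of_ne h _ _

lemma downAt_apply_self {k : ℕ} (c : Fin k → ℕ) (i : Fin k) :
    downAt c i i = c i - 1 := Function.update_self _ _ _

lemma memD1_downAt {k u : ℕ} {a c : Fin k → ℕ} (ha1 : ∀ i, 1 ≤ a i)
    (hc : memD1 u a c) {i : Fin k} (hi : specialIdx a c i) :
    memD1 u a (downAt c i) := by
  obtain ⟨hmono, h1, hu, hac⟩ := hc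
  obtain ⟨hai, hprev⟩ := hi
  have haile : a i ≤ c i - 1 := Nat.le_sub_one_of_lt hai
  refine ⟨?_, ?_, ?_, ?_⟩
  · intro p q hpq
    rcases eq_or_ne p i with rfl | hp
    · rw [downAt_apply_self, downAt_apply_ne c (ne_of_gt hpq)]
      exact lt_of_le_of_lt (Nat.sub_le _ _) (hmono hpq)
    · rw [downAt_apply_ne c hp]
      rcases eq_or_ne q i with rfl | hq
      · rw [downAt_apply_self]
        have hlt : (p : ℕ) < (q : ℕ) := hpq
        set j0 : Fin k := ⟨(q : ℕ) - 1, lt_of_le_of_lt (Nat.sub_le _ _) q.isLt⟩ with hj0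
        have hj0i : (j0 : ℕ) + 1 = (q : ℕ) := by simp [hj0]; omega
        have hcj0 : c j0 + 1 < c q := hprev j0 hj0i
        have hple : p ≤ j0 := Fin.le_def.mpr (by simp [hj0]; omega)
        have : c p ≤ c j0 := hmono.monotone hple
        omega
      · rw [downAt_apply_ne c hq]; exact hmono hpq
  · intro j
    rcases eq_or_ne j i with rfl | hj
    · rw [downAt_apply_self]; exact le_trans (ha1 j) haile
    · rw [downAt_apply_ne c hj]; exact h1 j
  · intro j
    rcases eq_or_ne j i with rfl | hj
    · rw [downAt_apply_self]; exact le_trans (Nat.sub_le _ _) (hu j)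
    · rw [downAt_apply_ne c hj]; exact hu j
  · intro j
    rcases eq_or_ne j i with rfl | hj
    · rw [downAt_apply_self]; exact haile
    · rw [downAt_apply_ne c hj]; exact hac j

/-- Descent lemma: if `d ≤ c` componentwise and `d` is strictly below `c` at some
index, then `d` is strictly below `c` at some *special* index. -/
lemma exists_special_of_lt {k u : ℕ} {a c d : Fin k → ℕ}
    (hc : memD1 u a c) (hd : memD1 u a d) (hle : ∀ j, d j ≤ c j) :
    ∀ j : Fin k, d j < c j → ∃ i, specialIdx a c i ∧ d i < c i := by
  suffices H : ∀ n, ∀ j : Fin k, (j : ℕ) = n → d j < c j →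
      ∃ i, specialIdx a c i ∧ d i < c i by
    intro j hj; exact H (j : ℕ) j rfl hj
  intro n
  induction n using Nat.strong_induction_on with
  | _ n ih =>
    intro j hjn hdj
    by_cases hsp : specialIdx a c j
    · exact ⟨j, hsp, hdj⟩
    · have haj : a j < c j := lt_of_le_of_lt (hd.2.2.2 j) hdj
      rw [specialIdx] at hsp
      push_neg at hsp
      obtain ⟨j', hj', hge⟩ := hsp haj
      have hj'lt : j' < j := by rw [Fin.lt_def]; omega
      have hcj : c j = c j' + 1 :=
        le_antisymm hge (Nat.succ_le_of_lt (hc.1 hj'lt))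
      have hdj' : d j' < c j' := by
        have := hd.1 hj'lt
        omega
      exact ih (j' : ℕ) (by omega) j' rfl hdj'

/-- A tuple `c ∈ D₁` is join-irreducible iff there is exactly one index `i` with
`cᵢ > aᵢ` and `cᵢ > c_{i-1} + 1`. -/
theorem joinIrredD1_iff_existsUnique {k u : ℕ} (a : Fin k → ℕ)
    (hk : 1 ≤ k) (hku : k ≤ u) (ha : StrictMono a) (ha1 : ∀ i, 1 ≤ a i)
    (hau : ∀ i : Fin k, a i + k ≤ u + (i : ℕ) + 1)
    (c : Fin k → ℕ) (hc : memD1 u a c) :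
    joinIrredD1 u a c ↔ ∃! i : Fin k, specialIdx a c i := by
  constructor
  · rintro ⟨hcmem, hne, hjoin⟩
    have hamem : memD1 u a a := by
      refine ⟨ha, ha1, fun i => ?_, fun i => le_rfl⟩
      have h1 := hau i
      have h2 : (i : ℕ) + 1 ≤ k := i.isLt
      omega
    have hle : ∀ j, a j ≤ c j := hc.2.2.2
    obtain ⟨j, hj⟩ : ∃ j, a j < c j := by
      by_contra h; push_neg at h
      exact hne (funext fun j => le_antisymm (h j) (hle j))
    obtain ⟨i, hi, _⟩ := exists_special_of_lt hcmem hamem hle j hj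
    refine ⟨i, hi, fun i' hi' => ?_⟩
    by_contra hne'
    have hd := memD1_downAt ha1 hcmem hi'
    have he := memD1_downAt ha1 hcmem hi
    have hjoineq : c = downAt c i' ⊔ downAt c i := by
      funext p
      simp only [Pi.sup_apply]
      rcases eq_or_ne p i' with rfl | hpi'
      · rw [downAt_apply_self, downAt_apply_ne c hne']
        exact (max_eq_right (Nat.sub_le _ _)).symm
      · rw [downAt_apply_ne c hpi']
        rcases eq_or_ne p i with rfl | hpi
        · rw [downAt_apply_self]
          exact (max_eq_left (Nat.sub_le _ _)).symm
        · rw [downAt_apply_ne c hpi]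
          exact (max_self _).symm
    rcases hjoin _ _ hd he hjoineq with h | h
    · have := congrFun h i'
      rw [downAt_apply_self] at this
      have := hi'.1
      have := ha1 i'
      omega
    · have := congrFun h i
      rw [downAt_apply_self] at this
      have := hi.1
      have := ha1 i
      omega
  · rintro ⟨i, hi, huniq⟩
    refine ⟨hc, ?_, ?_⟩
    · intro h
      rw [h] at hi
      exact lt_irrefl _ hi.1
    · intro d e hd he hcde
      by_contra hcon
      push_neg at hcon
      obtain ⟨hcd, hce⟩ := hcon
      have hdle : ∀ j, d j ≤ c j := fun j => by
        rw [hcde, Pi.sup_apply]; exact le_max_left _ _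
      have hele : ∀ j, e j ≤ c j := fun j => by
        rw [hcde, Pi.sup_apply]; exact le_max_right _ _
      obtain ⟨jd, hjd⟩ : ∃ j, d j < c j := by
        by_contra h; push_neg at h
        exact hcd (funext fun j => le_antisymm (h j) (hdle j))
      obtain ⟨je, hje⟩ : ∃ j, e j < c j := by
        by_contra h; push_neg at h
        exact hce (funext fun j => le_antisymm (h j) (hele j))
      obtain ⟨id', hid', hdid⟩ := exists_special_of_lt hc hd hdle jd hjd
      obtain ⟨ie', hie', heie⟩ := exists_special_of_lt hc he hele je hje
      have h1 : id' = i := huniq id' hid'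
      have h2 : ie' = i := huniq ie' hie'
      rw [h1] at hdid
      rw [h2] at heie
      have := congrFun hcde i
      rw [Pi.sup_apply] at this
      have hmax : max (d i) (e i) < c i := max_lt hdid heie
      omega
end

section
/- With D₁ and its poset P₁ of join-irreducible elements as above, define φ on P₁ by: if (c₁,…,c_k) is join-irreducible with unique index i satisfying c_i > a_i and c_i > c_{i-1}+1, set φ(c) = (p, q) = (u - c_i - (k - i), i - 1). Then for join-irreducible elements c, d with φ(c) = (p,q) and φ(d) = (p',q'), one has c ≤ d in D₁ if and only if p ≥ p' and q ≥ q'. -/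
/-!
Decrementing a join-irreducible `c` at an index `i` with `cᵢ > aᵢ` and `cᵢ > c_{i-1} + 1` stays
in `D₁`, so two such indices would write `c` as the join of two smaller elements. Hence at every
other index `t` either `cₜ ≤ aₜ` or `cₜ ≤ c_{t-1} + 1`, which gives `cₜ = aₜ` for `t < i` and
`cₜ ≤ max aₜ (cᵢ + t - i)` for `t ≥ i`. So `c ≤ d` reduces to `cᵢ ≤ dᵢ`, and as `cᵢ > aᵢ` this
holds exactly when `j ≤ i` and `cᵢ ≤ dⱼ + i - j`, where `j` is the special index of `d`.
-/

lemma StrictMono.apply_add_le_apply_add {k : ℕ} {c : Fin k → ℕ} (hc : StrictMono c)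
    {s t : Fin k} (hst : s ≤ t) : c s + t ≤ c t + s := by
  induction t using WellFoundedLT.induction with
  | ind t ih =>
    rcases hst.eq_or_lt with rfl | hlt
    · rfl
    · have hlt' : (s : ℕ) < t := hlt
      let p : Fin k := ⟨t - 1, by omega⟩
      have hp : (p : ℕ) + 1 = t := by simp only [p]; omega
      have hpt : p < t := Fin.lt_def.2 (by omega)
      have := ih p hpt (Fin.le_def.2 (by omega))
      have := hc hpt
      omega

section

variable {k u : ℕ} {a c : Fin k → ℕ}

lemma specialIdx.add_one_lt {i s : Fin k} (hi : specialIdx a c i) (hc : StrictMono c)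
    (hs : s < i) : c s + 1 < c i := by
  have hs' : (s : ℕ) < i := hs
  let p : Fin k := ⟨i - 1, by omega⟩
  have hsp : c s ≤ c p := hc.monotone (Fin.le_def.2 (by simp only [p]; omega))
  have := hi.2 p (by simp only [p]; omega)
  omega

lemma memD1_update_sub_one {t : Fin k} (hc : memD1 u a c) (ha1 : 1 ≤ a t)
    (ht : specialIdx a c t) : memD1 u a (Function.update c t (c t - 1)) := by
  obtain ⟨hmono, hone, hu, hac⟩ := hc
  have := ht.1
  refine ⟨fun s₁ s₂ h => ?_, fun s => ?_, fun s => ?_, fun s => ?_⟩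
  · simp only [Function.update_apply]
    split_ifs with h₁ h₂ h₂
    · exact absurd (h₁.trans h₂.symm) h.ne
    · subst h₁; have := hmono h; omega
    · subst h₂; have := ht.add_one_lt hmono h; omega
    · exact hmono h
  all_goals
    rcases eq_or_ne s t with rfl | hs
    · simp only [Function.update_self]
      have := hu s
      omega
    · simp only [Function.update_of_ne hs]
      first | exact hone s | exact hu s | exact hac s

namespace joinIrredD1

variable (hc : joinIrredD1 u a c) (ha1 : ∀ i, 1 ≤ a i)
include hc ha1

lemma specialIdx_unique {t₁ t₂ : Fin k} (h₁ : specialIdx a c t₁) (h₂ : specialIdx a c t₂) :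
    t₁ = t₂ := by
  by_contra hne
  obtain ⟨hm, -, hirr⟩ := hc
  have := h₁.1; have := h₂.1
  have hsup : c = Function.update c t₁ (c t₁ - 1) ⊔ Function.update c t₂ (c t₂ - 1) := by
    funext s
    simp only [Pi.sup_apply, Function.update_apply]
    split_ifs with hs₁ hs₂ hs₂
    · exact absurd (hs₁.symm.trans hs₂) hne
    all_goals (try subst s); omega
  rcases hirr _ _ (memD1_update_sub_one hm (ha1 _) h₁) (memD1_update_sub_one hm (ha1 _) h₂) hsup
    with h | h
  · have := congrFun h t₁; simp only [Function.update_self] at this; omega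
  · have := congrFun h t₂; simp only [Function.update_self] at this; omega

variable (ha : StrictMono a)
include ha

lemma apply_le_or {i : Fin k} (hi : specialIdx a c i) (t : Fin k) :
    c t ≤ a t ∨ (i ≤ t ∧ c t + i ≤ c i + t) := by
  induction t using WellFoundedLT.induction with
  | ind t ih =>
    rcases eq_or_ne t i with rfl | hti
    · exact Or.inr ⟨le_rfl, le_rfl⟩
    by_cases hat : c t ≤ a t
    · exact Or.inl hat
    have hns : ¬ specialIdx a c t := fun ht => hti (hc.specialIdx_unique ha1 ht hi)
    simp only [specialIdx, not_and, not_forall, not_lt] at hns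
    obtain ⟨s, hst, hcs⟩ := hns (by omega)
    have hs : s < t := Fin.lt_def.2 (by omega)
    rcases ih s hs with h | ⟨his, h⟩
    · have := ha hs
      exact Or.inl (by omega)
    · exact Or.inr ⟨his.trans hs.le, by omega⟩

lemma le_iff_apply_le {i : Fin k} (hi : specialIdx a c i) {d : Fin k → ℕ}
    (hd : memD1 u a d) : c ≤ d ↔ c i ≤ d i := by
  refine ⟨fun h => h i, fun h t => show c t ≤ d t from ?_⟩
  rcases hc.apply_le_or ha1 ha hi t with h' | ⟨hit, h'⟩
  · exact h'.trans (hd.2.2.2 t)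
  · have := hd.1.apply_add_le_apply_add hit
    omega

lemma le_apply_iff {j : Fin k} (hj : specialIdx a c j) {i : Fin k} {x : ℕ} (hx : a i < x) :
    x ≤ c i ↔ j ≤ i ∧ x + j ≤ c j + i := by
  constructor
  · intro h
    rcases hc.apply_le_or ha1 ha hj i with h' | ⟨hji, h'⟩
    · omega
    · exact ⟨hji, by omega⟩
  · rintro ⟨hji, h⟩
    have := hc.1.1.apply_add_le_apply_add hji
    omega

end joinIrredD1

end

theorem le_iff_phi_ge_general {k u : ℕ} (a : Fin k → ℕ)
    (ha : StrictMono a) (ha1 : ∀ i, 1 ≤ a i)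
    (c d : Fin k → ℕ) (hc : joinIrredD1 u a c) (hd : joinIrredD1 u a d)
    (i j : Fin k) (hi : specialIdx a c i) (hj : specialIdx a d j)
    (p q p' q' : ℤ)
    (hp : p = (u : ℤ) - c i - ((k : ℤ) - 1 - (i : ℕ))) (hq : q = (i : ℕ))
    (hp' : p' = (u : ℤ) - d j - ((k : ℤ) - 1 - (j : ℕ))) (hq' : q' = (j : ℕ)) :
    c ≤ d ↔ p' ≤ p ∧ q' ≤ q := by
  subst hp hq hp' hq'
  rw [hc.le_iff_apply_le ha1 ha hi hd.1, hd.le_apply_iff ha1 ha hj hi.1, Fin.le_def]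
  omega

/-- `φ(c) = (p, q) = (u - cᵢ - (k - i), i - 1)` (with `i` the 1-based special index
of the join-irreducible tuple `c`).  For join-irreducible `c, d` with `φ(c) = (p,q)`
and `φ(d) = (p',q')`, one has `c ≤ d` iff `p ≥ p'` and `q ≥ q'`. -/
theorem le_iff_phi_ge {k u : ℕ} (a : Fin k → ℕ)
    (hk : 1 ≤ k) (hku : k ≤ u) (ha : StrictMono a) (ha1 : ∀ i, 1 ≤ a i)
    (hau : ∀ i : Fin k, a i + k ≤ u + (i : ℕ) + 1)
    (c d : Fin k → ℕ) (hc : joinIrredD1 u a c) (hd : joinIrredD1 u a d)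
    (i j : Fin k) (hi : specialIdx a c i) (hj : specialIdx a d j)
    (p q p' q' : ℤ)
    (hp : p = (u : ℤ) - c i - ((k : ℤ) - 1 - (i : ℕ))) (hq : q = (i : ℕ))
    (hp' : p' = (u : ℤ) - d j - ((k : ℤ) - 1 - (j : ℕ))) (hq' : q' = (j : ℕ)) :
    c ≤ d ↔ p' ≤ p ∧ q' ≤ q :=
  le_iff_phi_ge_general a ha ha1 c d hc hd i j hi hj p q p' q' hp hq hp' hq'
end

section
/- With notation as above, the image of φ: P₁ → ℕ² is a 'staircase' set: if (p,q) lies in the image of φ and 0 ≤ p' ≤ p, 0 ≤ q' ≤ q, then (p',q') also lies in the image of φ. -/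
/-- For a strictly monotone `f : Fin k → ℕ`, values grow at least linearly. -/
lemma smono_le {k : ℕ} {f : Fin k → ℕ} (hf : StrictMono f) :
    ∀ d : ℕ, ∀ i j : Fin k, (i : ℕ) + d = (j : ℕ) → f i + d ≤ f j := by
  intro d
  induction d with
  | zero =>
    intro i j h
    have : i = j := Fin.ext (by omega)
    simp [this]
  | succ d ih =>
    intro i j h
    have hlt : (i : ℕ) + d < k := by have := j.isLt; omega
    have h1 := ih i ⟨(i : ℕ) + d, hlt⟩ rfl
    have h2 : f ⟨(i : ℕ) + d, hlt⟩ < f j := hf (by simp [Fin.lt_def]; omega)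
    omega

/-- The image of `φ : P₁ → ℕ²`, `φ(c) = (u - cᵢ - (k - i), i - 1)`, is a staircase:
if `(p, q)` is in the image and `0 ≤ p' ≤ p`, `0 ≤ q' ≤ q`, then `(p', q')` is also
in the image. -/
theorem phi_image_staircase {k u : ℕ} (a : Fin k → ℕ)
    (hk : 1 ≤ k) (hku : k ≤ u) (ha : StrictMono a) (ha1 : ∀ i, 1 ≤ a i)
    (hau : ∀ i : Fin k, a i + k ≤ u + (i : ℕ) + 1)
    (p q p' q' : ℤ)
    (hpq : ∃ (c : Fin k → ℕ) (i : Fin k), joinIrredD1 u a c ∧ specialIdx a c i ∧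
      p = (u : ℤ) - c i - ((k : ℤ) - 1 - (i : ℕ)) ∧ q = (i : ℕ))
    (hp' : 0 ≤ p' ∧ p' ≤ p) (hq' : 0 ≤ q' ∧ q' ≤ q) :
    ∃ (c : Fin k → ℕ) (i : Fin k), joinIrredD1 u a c ∧ specialIdx a c i ∧
      p' = (u : ℤ) - c i - ((k : ℤ) - 1 - (i : ℕ)) ∧ q' = (i : ℕ) := by
  obtain ⟨c, i, ⟨⟨hcm, hc1, hcu, hca⟩, hcne, hcJ⟩, ⟨hsi1, hsi2⟩, hp, hq⟩ := hpq
  have hik := i.isLt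
  have hi'k : q'.toNat < k := by omega
  set i' : Fin k := ⟨q'.toNat, hi'k⟩ with hi'def
  have hi'val : (i' : ℕ) = q'.toNat := rfl
  have hi'le : (i' : ℕ) ≤ (i : ℕ) := by simp only [hi'val]; omega
  -- c i + (k - 1 - i) ≤ u
  have hklast : k - 1 < k := by omega
  have hlast : c i + (k - 1 - (i : ℕ)) ≤ c ⟨k - 1, hklast⟩ :=
    smono_le hcm (k - 1 - (i : ℕ)) i ⟨k - 1, hklast⟩ (by simp; omega)
  have hcule := hcu ⟨k - 1, hklast⟩
  have hci : a i < c i := hsi1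
  have hai' : a i' + ((i : ℕ) - (i' : ℕ)) ≤ a i :=
    smono_le ha ((i : ℕ) - (i' : ℕ)) i' i (by omega)
  have hau' : ∀ j : Fin k, a j ≤ u := fun j => by have := hau j; have := j.isLt; omega
  -- the new value v
  set V : ℤ := (u : ℤ) - p' - ((k : ℤ) - 1 - (i' : ℕ)) with hVdef
  have hV : (a i' : ℤ) + 1 ≤ V := by simp only [hVdef, hi'val]; omega
  have hVpos : 0 ≤ V := by have := ha1 i'; omega
  set v : ℕ := V.toNat with hvdef
  have hvV : (v : ℤ) = V := Int.toNat_of_nonneg hVpos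
  have hva : a i' < v := by omega
  have hvu : v + (k - 1 - (i' : ℕ)) ≤ u := by
    have h1 : (v : ℤ) = (u : ℤ) - p' - ((k : ℤ) - 1 - (i' : ℕ)) := by rw [hvV]
    omega
  -- the new tuple
  set c' : Fin k → ℕ :=
    fun j => if (j : ℕ) < (i' : ℕ) then a j else max (a j) (v + ((j : ℕ) - (i' : ℕ)))
    with hc'def
  have hc'lt : ∀ j : Fin k, (j : ℕ) < (i' : ℕ) → c' j = a j := by
    intro j hj; simp only [hc'def, if_pos hj]
  have hc'ge : ∀ j : Fin k, (i' : ℕ) ≤ (j : ℕ) →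
      c' j = max (a j) (v + ((j : ℕ) - (i' : ℕ))) := by
    intro j hj
    rw [hi'val] at hj
    simp only [hc'def, hi'val]
    rw [if_neg (by omega)]
  have hc'i' : c' i' = v := by
    rw [hc'ge i' le_rfl]; simp; omega
  have hc'a : ∀ j, a j ≤ c' j := by
    intro j
    by_cases hj : (j : ℕ) < (i' : ℕ)
    · rw [hc'lt j hj]
    · rw [hc'ge j (by omega)]; exact le_max_left _ _
  have hc'mono : StrictMono c' := by
    intro j1 j2 hlt
    have hltv : (j1 : ℕ) < (j2 : ℕ) := hlt
    by_cases h1 : (j1 : ℕ) < (i' : ℕ)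
    · rw [hc'lt j1 h1]
      by_cases h2 : (j2 : ℕ) < (i' : ℕ)
      · rw [hc'lt j2 h2]; exact ha hlt
      · rw [hc'ge j2 (by omega)]
        exact lt_of_lt_of_le (ha hlt) (le_max_left _ _)
    · have h2 : ¬ (j2 : ℕ) < (i' : ℕ) := by omega
      rw [hc'ge j1 (by omega), hc'ge j2 (by omega)]
      exact max_lt_max (ha hlt) (by omega)
  have hc'mem : memD1 u a c' := by
    refine ⟨hc'mono, fun j => le_trans (ha1 j) (hc'a j), ?_, hc'a⟩
    intro j
    by_cases hj : (j : ℕ) < (i' : ℕ)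
    · rw [hc'lt j hj]; exact hau' j
    · rw [hc'ge j (by omega)]
      exact max_le (hau' j) (by have := j.isLt; omega)
  refine ⟨c', i', ⟨hc'mem, ?_, ?_⟩, ⟨?_, ?_⟩, ?_, ?_⟩
  · -- c' ≠ a
    intro h
    have := congrFun h i'
    rw [hc'i'] at this
    omega
  · -- join-irreducible
    intro d e hd he hde
    have hkey : ∀ f : Fin k → ℕ, memD1 u a f → f i' = v → (∀ j, f j ≤ c' j) → c' = f := by
      intro f ⟨hfm, _, _, hfa⟩ hfi hfle
      funext j
      by_cases hj : (j : ℕ) < (i' : ℕ)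
      · rw [hc'lt j hj]
        exact le_antisymm (hfa j) (hc'lt j hj ▸ hfle j)
      · have hstep : f i' + ((j : ℕ) - (i' : ℕ)) ≤ f j :=
          smono_le hfm ((j : ℕ) - (i' : ℕ)) i' j (by omega)
        have : c' j ≤ f j := by
          rw [hc'ge j (by omega)]
          exact max_le (hfa j) (by omega)
        exact le_antisymm this (hfle j)
    have hdle : ∀ j, d j ≤ c' j := by
      intro j
      have h := congrFun hde j
      simp only [Pi.sup_apply] at h
      rw [h]
      exact le_max_left _ _
    have hele : ∀ j, e j ≤ c' j := by
      intro j
      have h := congrFun hde j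
      simp only [Pi.sup_apply] at h
      rw [h]
      exact le_max_right _ _
    have hi'eq : c' i' = max (d i') (e i') := by
      have := congrFun hde i'
      simpa [Pi.sup_apply] using this
    rcases max_choice (d i') (e i') with hmc | hmc
    · left; exact hkey d hd (by rw [← hmc, ← hi'eq, hc'i']) hdle
    · right; exact hkey e he (by rw [← hmc, ← hi'eq, hc'i']) hele
  · -- a i' < c' i'
    rw [hc'i']; exact hva
  · -- gap condition
    intro j hj
    have hjlt : (j : ℕ) < (i' : ℕ) := by omega
    rw [hc'lt j hjlt, hc'i']
    have : a j < a i' := ha (show j < i' from hjlt)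
    omega
  · -- p' value
    rw [hc'i']
    omega
  · -- q' value
    simp only [hi'val]; omega
end

section
/- With notation as above, the coheight of a join-irreducible element c in P₁ (the maximal length of a chain in P₁ ascending from c) equals p + q where φ(c) = (p, q). -/
/-- The coheight of `c` in the poset `P₁` of join-irreducible elements of `D₁`:
the maximal `m` such that there is a chain `c = x₀ < x₁ < ⋯ < x_m` in `P₁`. -/
noncomputable def coheightP1 {k : ℕ} (u : ℕ) (a c : Fin k → ℕ) : ℕ :=
  sSup {m : ℕ | ∃ f : Fin (m + 1) → (Fin k → ℕ),
    f 0 = c ∧ (∀ t, joinIrredD1 u a (f t)) ∧ StrictMono f}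


/-!
Every join-irreducible `c` with special index `i` is the least element of `D₁` whose `i`-th
coordinate is at least `c i`; so `P₁` is parametrised by the pairs `(i, w)` with `a i < w` and
`w + (k - 1 - i) ≤ u`. If one such element lies strictly below another, the value
`p + q = u - w - (k - 1 - i) + i` strictly drops, and it is never negative; this bounds the
coheight. Conversely, `(i, w) ↦ (i - 1, w - 1)` (while `i > 0`) and `(0, w) ↦ (0, w + 1)` are
strict steps up in `P₁` lowering `p + q` by exactly one, which gives a chain of that length.
-/

theorem StrictMono.apply_add_sub_le_apply {n : ℕ} {f : Fin n → ℕ} (hf : StrictMono f)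
    {i j : Fin n} (hij : i ≤ j) : f i + ((j : ℕ) - i) ≤ f j := by
  have hcard : (Finset.Icc i j).card ≤ (Finset.Icc (f i) (f j)).card :=
    Finset.card_le_card_of_injOn f
      (fun x hx => by
        obtain ⟨hix, hxj⟩ := Finset.mem_Icc.1 hx
        exact Finset.mem_Icc.2 ⟨hf.monotone hix, hf.monotone hxj⟩)
      hf.injective.injOn
  rw [Fin.card_Icc, Nat.card_Icc] at hcard
  have hfij := hf.monotone hij
  have hij' : (i : ℕ) ≤ j := hij
  omega

namespace D1

variable {k u : ℕ} {a c : Fin k → ℕ} {i j : Fin k}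

def chainLengths (u : ℕ) (a c : Fin k → ℕ) : Set ℕ :=
  {m | ∃ f : Fin (m + 1) → (Fin k → ℕ), f 0 = c ∧ (∀ t, joinIrredD1 u a (f t)) ∧ StrictMono f}

lemma zero_mem_chainLengths (hc : joinIrredD1 u a c) : 0 ∈ chainLengths u a c :=
  ⟨fun _ => c, rfl, fun _ => hc, Subsingleton.strictMono (α := Fin 1) _⟩

lemma succ_mem_chainLengths {d : Fin k → ℕ} {m : ℕ} (hc : joinIrredD1 u a c) (hcd : c < d)
    (hm : m ∈ chainLengths u a d) : m + 1 ∈ chainLengths u a c := by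
  obtain ⟨f, hf0, hfj, hf⟩ := hm
  subst hf0
  exact ⟨Fin.cons c f, rfl, Fin.cases hc hfj,
    Fin.strictMono_cons.2 ⟨fun t => hcd.trans_le (hf.monotone (Fin.zero_le t)), hf⟩⟩

lemma exists_lt_of_succ_mem_chainLengths {m : ℕ} (hm : m + 1 ∈ chainLengths u a c) :
    ∃ d, joinIrredD1 u a d ∧ c < d ∧ m ∈ chainLengths u a d := by
  obtain ⟨f, rfl, hfj, hf⟩ := hm
  exact ⟨f 1, hfj 1, hf Fin.zero_lt_one,
    Fin.tail f, rfl, fun t => hfj t.succ, hf.comp Fin.strictMono_succ⟩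

/-- The least element of `D₁` whose `i`-th coordinate is at least `w` (see `leastWith_le`). -/
def leastWith (a : Fin k → ℕ) (i : Fin k) (w : ℕ) : Fin k → ℕ :=
  fun j => if j < i then a j else max (a j) (w + j - i)

lemma leastWith_of_lt (h : j < i) (w : ℕ) : leastWith a i w j = a j := if_pos h

lemma leastWith_of_le (h : i ≤ j) (w : ℕ) : leastWith a i w j = max (a j) (w + j - i) :=
  if_neg h.not_gt

@[simp]
lemma leastWith_self (w : ℕ) : leastWith a i w i = max (a i) w := by
  simp [leastWith_of_le le_rfl]

lemma leastWith_self_of_le {w : ℕ} (hw : a i ≤ w) : leastWith a i w i = w := by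
  simp [hw]

lemma le_leastWith (w : ℕ) : a ≤ leastWith a i w := by
  refine Pi.le_def.2 fun j => ?_
  rcases lt_or_ge j i with h | h
  · rw [leastWith_of_lt h]
  · rw [leastWith_of_le h]; exact le_max_left _ _

lemma leastWith_mono : Monotone (leastWith a i) := by
  intro w w' hw j
  rcases lt_or_ge j i with h | h
  · rw [leastWith_of_lt h, leastWith_of_lt h]
  · rw [leastWith_of_le h, leastWith_of_le h]; gcongr

lemma strictMono_leastWith (ha : StrictMono a) (w : ℕ) : StrictMono (leastWith a i w) := by
  intro j j' hjj'
  have hlt := ha hjj'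
  have hv : (j : ℕ) < j' := hjj'
  rcases lt_or_ge j' i with h' | h'
  · rw [leastWith_of_lt h', leastWith_of_lt (hjj'.trans h')]; exact hlt
  · rw [leastWith_of_le h']
    rcases lt_or_ge j i with h | h
    · rw [leastWith_of_lt h]; exact hlt.trans_le (le_max_left _ _)
    · rw [leastWith_of_le h]
      have hi : (i : ℕ) ≤ j := h
      exact max_lt (lt_max_of_lt_left hlt) (lt_max_of_lt_right (by omega))

lemma leastWith_le {z : Fin k → ℕ} {w : ℕ} (hz : StrictMono z) (haz : a ≤ z) (hw : w ≤ z i) :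
    leastWith a i w ≤ z := by
  refine Pi.le_def.2 fun j => ?_
  rcases lt_or_ge j i with h | h
  · rw [leastWith_of_lt h]; exact haz j
  · rw [leastWith_of_le h]
    have hgap := hz.apply_add_sub_le_apply h
    have hi : (i : ℕ) ≤ j := h
    exact max_le (haz j) (by omega)

lemma leastWith_lt_leastWith_succ {w : ℕ} (hw : a i ≤ w) :
    leastWith a i w < leastWith a i (w + 1) := by
  refine (leastWith_mono (Nat.le_succ w)).lt_of_ne fun h => ?_
  have := congrFun h i
  rw [leastWith_self_of_le hw, leastWith_self_of_le (by omega)] at this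
  omega

lemma leastWith_succ_lt_leastWith {i' : Fin k} {w : ℕ} (hi' : (i' : ℕ) + 1 = i) (hw : a i' < w) :
    leastWith a i (w + 1) < leastWith a i' w := by
  have hle : leastWith a i (w + 1) ≤ leastWith a i' w := by
    refine Pi.le_def.2 fun j => ?_
    rcases lt_or_ge j i' with h | h
    · rw [leastWith_of_lt (h.trans (Fin.lt_def.2 (by omega))), leastWith_of_lt h]
    · rw [leastWith_of_le h]
      have hj : (i' : ℕ) ≤ j := h
      rcases lt_or_ge j i with h' | h'
      · rw [leastWith_of_lt h']; exact le_max_left _ _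
      · rw [leastWith_of_le h']
        have hj' : (i : ℕ) ≤ j := h'
        exact le_of_eq (by congr 1; omega)
  refine hle.lt_of_ne fun h => ?_
  have := congrFun h i'
  rw [leastWith_of_lt (Fin.lt_def.2 (by omega)), leastWith_self] at this
  omega

lemma joinIrredD1_leastWith (ha : StrictMono a) (ha1 : ∀ j, 1 ≤ a j)
    (hau : ∀ j : Fin k, a j + k ≤ u + (j : ℕ) + 1) {w : ℕ} (hw : a i < w)
    (hwu : w + k ≤ u + i + 1) : joinIrredD1 u a (leastWith a i w) := by
  have hwi : leastWith a i w i = w := leastWith_self_of_le hw.le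
  have hmem : memD1 u a (leastWith a i w) := by
    refine ⟨strictMono_leastWith ha w, fun j => (ha1 j).trans (le_leastWith w j), fun j => ?_,
      le_leastWith w⟩
    have hj := j.isLt
    rcases lt_or_ge j i with h | h
    · rw [leastWith_of_lt h]; have := hau j; omega
    · rw [leastWith_of_le h]; have := hau j; exact max_le (by omega) (by omega)
  refine ⟨hmem, fun h => by have := congrFun h i; omega, fun d e hd he hde => ?_⟩
  have hdi : max (d i) (e i) = w := by rw [← hwi, hde]; rfl
  -- The join is attained at coordinate `i` by `d` or `e`, which then lies above `leastWith a i w`.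
  rcases max_choice (d i) (e i) with h | h
  · exact Or.inl (le_antisymm (leastWith_le hd.1 hd.2.2.2 (by omega)) (hde ▸ le_sup_left))
  · exact Or.inr (le_antisymm (leastWith_le he.1 he.2.2.2 (by omega)) (hde ▸ le_sup_right))

lemma le_of_forall_specialIdx {z : Fin k → ℕ} (hz : StrictMono z) (haz : a ≤ z)
    (h : ∀ j, specialIdx a c j → c j ≤ z j) : c ≤ z := by
  refine Pi.le_def.2 fun j => ?_
  induction j using WellFoundedLT.induction with
  | _ j ih =>
    by_contra hlt
    push Not at hlt
    refine hlt.not_ge (h j ⟨(haz j).trans_lt hlt, fun j' hj' => ?_⟩)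
    have hj'j : j' < j := Fin.lt_def.2 (by omega)
    have := ih j' hj'j
    have := hz hj'j
    omega

lemma exists_specialIdx (ha : StrictMono a) (hac : a ≤ c) (hca : c ≠ a) :
    ∃ i, specialIdx a c i := by
  by_contra! h
  exact hca (le_antisymm (le_of_forall_specialIdx ha le_rfl fun j hj => (h j hj).elim) hac)

lemma memD1_update_specialIdx (ha1 : ∀ j, 1 ≤ a j) (hc : memD1 u a c) (hi : specialIdx a c i) :
    memD1 u a (Function.update c i (c i - 1)) := by
  obtain ⟨hsm, hc1, hcu, hac⟩ := hc
  have hai : a i < c i := hi.1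
  have hlt : ∀ p, p < i → c p < c i - 1 := fun p hp => by
    rcases Nat.lt_or_ge ((p : ℕ) + 1) i with h | h
    · have := hsm (show p < ⟨p + 1, by omega⟩ from Fin.lt_def.2 (Nat.lt_succ_self _))
      have := hsm (show (⟨p + 1, by omega⟩ : Fin k) < i from Fin.lt_def.2 h)
      omega
    · have := hi.2 p (by have : (p : ℕ) < i := hp; omega)
      omega
  refine ⟨fun p q hpq => ?_, fun j => ?_, fun j => ?_, fun j => ?_⟩
  · rcases eq_or_ne q i with rfl | hq
    · rw [Function.update_self, Function.update_of_ne hpq.ne]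
      exact hlt p hpq
    · rw [Function.update_of_ne hq]
      rcases eq_or_ne p i with rfl | hp
      · rw [Function.update_self]
        exact (Nat.sub_le _ _).trans_lt (hsm hpq)
      · rw [Function.update_of_ne hp]
        exact hsm hpq
  all_goals
    rcases eq_or_ne j i with rfl | hj
    · rw [Function.update_self]
      have := ha1 j
      have := hcu j
      omega
    · rw [Function.update_of_ne hj]
      first | exact hc1 j | exact hcu j | exact hac j

lemma specialIdx_unique (ha1 : ∀ j, 1 ≤ a j) (hc : joinIrredD1 u a c) (hi : specialIdx a c i)
    (hj : specialIdx a c j) : j = i := by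
  by_contra hji
  have hsup : c = Function.update c j (c j - 1) ⊔ Function.update c i (c i - 1) := by
    funext p
    simp only [Pi.sup_apply, Function.update_apply]
    split_ifs with hpj hpi <;> subst_vars <;> omega
  have hneq : ∀ p, specialIdx a c p → c ≠ Function.update c p (c p - 1) := fun p hp h => by
    have := congrFun h p
    rw [Function.update_self] at this
    have := hp.1
    omega
  rcases hc.2.2 _ _ (memD1_update_specialIdx ha1 hc.1 hj) (memD1_update_specialIdx ha1 hc.1 hi)
    hsup with h | h
  · exact hneq j hj h
  · exact hneq i hi h

lemma eq_leastWith (ha : StrictMono a) (ha1 : ∀ j, 1 ≤ a j) (hc : joinIrredD1 u a c)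
    (hi : specialIdx a c i) : c = leastWith a i (c i) := by
  refine le_antisymm (le_of_forall_specialIdx (strictMono_leastWith ha _) (le_leastWith _)
    fun j hj => ?_) (leastWith_le hc.1.1 hc.1.2.2.2 le_rfl)
  rw [specialIdx_unique ha1 hc hi hj, leastWith_self]
  exact le_max_right _ _

/-- `p + q` for `φ(leastWith a i w) = (p, q)`; as `i : Fin k` counts from `0`, here `q = i`. -/
def phiSum (u : ℕ) (i : Fin k) (w : ℕ) : ℤ :=
  ((u : ℤ) - w - ((k : ℤ) - 1 - (i : ℕ))) + (i : ℕ)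

lemma apply_add_le_of_memD1 (hc : memD1 u a c) (i : Fin k) : c i + k ≤ u + i + 1 := by
  obtain ⟨n, rfl⟩ : ∃ n, k = n + 1 := ⟨k - 1, by have := i.isLt; omega⟩
  have := hc.1.apply_add_sub_le_apply (Fin.le_last i)
  have := hc.2.2.1 (Fin.last n)
  rw [Fin.val_last] at *
  omega

lemma phiSum_lt_of_leastWith_lt {i' : Fin k} {w w' : ℕ} (hw : a i < w)
    (h : leastWith a i w < leastWith a i' w') : phiSum u i' w' < phiSum u i w := by
  have hwi : leastWith a i w i = w := leastWith_self_of_le hw.le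
  have hle : leastWith a i w i ≤ leastWith a i' w' i := h.le i
  unfold phiSum
  rcases lt_trichotomy i i' with hii' | rfl | hii'
  · rw [leastWith_of_lt hii', hwi] at hle
    omega
  · have hww' : w ≠ w' := fun hww' => h.ne (hww' ▸ rfl)
    rw [hwi, leastWith_self] at hle
    omega
  · rw [leastWith_of_le hii'.le, hwi] at hle
    have : (i' : ℕ) < i := hii'
    omega

lemma le_phiSum_of_mem_chainLengths (ha : StrictMono a) (ha1 : ∀ j, 1 ≤ a j) {m : ℕ}
    (hc : joinIrredD1 u a c) (hi : specialIdx a c i) (hm : m ∈ chainLengths u a c) :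
    (m : ℤ) ≤ phiSum u i (c i) := by
  induction m generalizing c i with
  | zero =>
    have := apply_add_le_of_memD1 hc.1 i
    unfold phiSum
    omega
  | succ m ih =>
    obtain ⟨d, hd, hcd, hmd⟩ := exists_lt_of_succ_mem_chainLengths hm
    obtain ⟨j, hj⟩ := exists_specialIdx ha hd.1.2.2.2 hd.2.1
    rw [eq_leastWith ha ha1 hc hi, eq_leastWith ha ha1 hd hj] at hcd
    have := phiSum_lt_of_leastWith_lt (u := u) hi.1 hcd
    have := ih hd hj hmd
    push_cast
    omega

/-- The chain goes from `(i, w)` to `(i - 1, w - 1)` down to index `0`, then raises the value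
up to its maximum `u - k + 1`; each step lowers `phiSum` by one. -/
lemma mem_chainLengths_leastWith (ha : StrictMono a) (ha1 : ∀ j, 1 ≤ a j)
    (hau : ∀ j : Fin k, a j + k ≤ u + (j : ℕ) + 1) {n : ℕ} {w : ℕ} (hw : a i < w)
    (hwu : w + k ≤ u + i + 1) (hn : (n : ℤ) = phiSum u i w) :
    n ∈ chainLengths u a (leastWith a i w) := by
  induction n generalizing i w with
  | zero => exact zero_mem_chainLengths (joinIrredD1_leastWith ha ha1 hau hw hwu)
  | succ n ih =>
    have hirr := joinIrredD1_leastWith ha ha1 hau hw hwu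
    unfold phiSum at hn
    rcases Nat.eq_zero_or_pos (i : ℕ) with hi0 | hi0
    · exact succ_mem_chainLengths hirr (leastWith_lt_leastWith_succ hw.le)
        (ih (by omega) (by omega) (by unfold phiSum; push_cast at hn ⊢; omega))
    · let i' : Fin k := ⟨i - 1, by omega⟩
      have hi' : (i' : ℕ) + 1 = i := by simp only [i']; omega
      have hai' : a i' < a i := ha (Fin.lt_def.2 (by omega))
      obtain ⟨w', rfl⟩ : ∃ w', w = w' + 1 := ⟨w - 1, by omega⟩
      exact succ_mem_chainLengths hirr (leastWith_succ_lt_leastWith hi' (by omega))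
        (ih (by omega) (by omega) (by unfold phiSum; push_cast at hn ⊢; omega))

end D1

open D1 in
theorem coheight_eq_phi_sum_general {k u : ℕ} (a : Fin k → ℕ)
    (ha : StrictMono a) (ha1 : ∀ i, 1 ≤ a i)
    (hau : ∀ i : Fin k, a i + k ≤ u + (i : ℕ) + 1)
    (c : Fin k → ℕ) (hc : joinIrredD1 u a c) (i : Fin k) (hi : specialIdx a c i) :
    (coheightP1 u a c : ℤ) =
      ((u : ℤ) - c i - ((k : ℤ) - 1 - (i : ℕ))) + (i : ℕ) := by
  have hci := apply_add_le_of_memD1 hc.1 i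
  obtain ⟨n, hn⟩ : ∃ n : ℕ, phiSum u i (c i) = n :=
    Int.eq_ofNat_of_zero_le (by unfold phiSum; omega)
  have hmem : n ∈ chainLengths u a c := by
    rw [eq_leastWith ha ha1 hc hi]
    exact mem_chainLengths_leastWith ha ha1 hau hi.1 hci hn.symm
  have hsup : coheightP1 u a c = n :=
    IsGreatest.csSup_eq ⟨hmem, fun m hm => by
      exact_mod_cast hn ▸ le_phiSum_of_mem_chainLengths ha ha1 hc hi hm⟩
  rw [hsup, ← hn]
  rfl

/-- The coheight of a join-irreducible element `c` in `P₁` equals `p + q`,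
where `φ(c) = (p, q) = (u - cᵢ - (k - i), i - 1)`. -/
theorem coheight_eq_phi_sum {k u : ℕ} (a : Fin k → ℕ)
    (hk : 1 ≤ k) (hku : k ≤ u) (ha : StrictMono a) (ha1 : ∀ i, 1 ≤ a i)
    (hau : ∀ i : Fin k, a i + k ≤ u + (i : ℕ) + 1)
    (c : Fin k → ℕ) (hc : joinIrredD1 u a c) (i : Fin k) (hi : specialIdx a c i) :
    (coheightP1 u a c : ℤ) =
      ((u : ℤ) - c i - ((k : ℤ) - 1 - (i : ℕ))) + (i : ℕ) :=
  coheight_eq_phi_sum_general a ha ha1 hau c hc i hi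
end

section
/- With notation as above, writing {i ≤ k : a_i + 1 < a_{i+1}, a_i < u} = {l₁ < l₂ < ⋯ < l_v} (with a_{k+1} := u+1 by convention), the minimal elements of P₁ are exactly the tuples (a₁, …, a_{l_j - 1}, a_{l_j} + 1, a_{l_j + 1}, …, a_k) for j = 1, …, v, and the coheight of the j-th one is u - k - a_{l_j} + 2 l_j - 2. -/
/-- `a_{i+1}` with the convention `a_{k+1} := u + 1`. -/
def aNext {k : ℕ} (u : ℕ) (a : Fin k → ℕ) (i : Fin k) : ℕ :=
  if h : (i : ℕ) + 1 < k then a ⟨(i : ℕ) + 1, h⟩ else u + 1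

/-- Membership of the (0-based) index `i` in `{i ≤ k : aᵢ + 1 < a_{i+1}, aᵢ < u}`. -/
def memL {k : ℕ} (u : ℕ) (a : Fin k → ℕ) (i : Fin k) : Prop :=
  a i + 1 < aNext u a i ∧ a i < u

namespace AuxP1

variable {k u : ℕ}

/-- decrementable index -/
def Dec (a c : Fin k → ℕ) (p : Fin k) : Prop :=
  a p < c p ∧ ∀ q : Fin k, (q : ℕ) + 1 = (p : ℕ) → c q + 1 < c p

/-- minimal index where `c` differs from `a` -/
def MinDiff (a c : Fin k → ℕ) (s : Fin k) : Prop :=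
  a s < c s ∧ ∀ t, t < s → c t = a t

lemma sm_adj {c : Fin k → ℕ} (h : ∀ p q : Fin k, (p : ℕ) + 1 = (q : ℕ) → c p < c q) :
    StrictMono c := by
  have key : ∀ d : ℕ, ∀ x y : Fin k, (y : ℕ) = (x : ℕ) + d + 1 → c x < c y := by
    intro d
    induction d with
    | zero => intro x y hy; exact h x y (by omega)
    | succ d ih =>
      intro x y hy
      have hz : (x : ℕ) + d + 1 < k := by have := y.isLt; omega
      exact (ih x ⟨(x : ℕ) + d + 1, hz⟩ rfl).trans
        (h ⟨(x : ℕ) + d + 1, hz⟩ y (by simp only [Fin.val_mk]; omega))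
  intro x y hxy
  have hxy' : (x : ℕ) < (y : ℕ) := hxy
  exact key ((y : ℕ) - (x : ℕ) - 1) x y (by omega)

lemma sm_le {c : Fin k → ℕ} (hc : StrictMono c) {p q : Fin k} (hpq : (p : ℕ) ≤ (q : ℕ)) :
    c p + ((q : ℕ) - (p : ℕ)) ≤ c q := by
  have key : ∀ d : ℕ, ∀ p q : Fin k, (q : ℕ) = (p : ℕ) + d → c p + d ≤ c q := by
    intro d
    induction d with
    | zero => intro p q hq; have h : p = q := Fin.ext (by omega); rw [h]; omega
    | succ d ih =>
      intro p q hq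
      have hz : (p : ℕ) + d < k := by have := q.isLt; omega
      have h1 := ih p ⟨(p : ℕ) + d, hz⟩ rfl
      have h2 : c ⟨(p : ℕ) + d, hz⟩ < c q := hc (Fin.lt_def.mpr (by simp only [Fin.val_mk]; omega))
      omega
  have := key ((q : ℕ) - (p : ℕ)) p q (by omega)
  omega

lemma exists_minDiff {a c : Fin k → ℕ} (hca : ∀ t, a t ≤ c t) (hne : c ≠ a) :
    ∃ s, MinDiff a c s := by
  classical
  set T : Finset (Fin k) := Finset.univ.filter (fun t : Fin k => a t < c t) with hTdef
  have hmemT : ∀ t : Fin k, t ∈ T ↔ a t < c t := by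
    intro t; rw [hTdef, Finset.mem_filter]; simp
  have hT : T.Nonempty := by
    by_contra h
    apply hne
    funext t
    have ht : ¬ a t < c t := fun hlt => h ⟨t, (hmemT t).mpr hlt⟩
    have := hca t
    omega
  refine ⟨T.min' hT, ?_, ?_⟩
  · exact (hmemT _).mp (T.min'_mem hT)
  · intro t ht
    have hnm : ¬ a t < c t := by
      intro hlt
      exact absurd (T.min'_le t ((hmemT t).mpr hlt)) (not_le.mpr ht)
    have := hca t
    omega

lemma minDiff_dec {a c : Fin k → ℕ} (ha : StrictMono a) (hca : ∀ t, a t ≤ c t)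
    {s : Fin k} (h : MinDiff a c s) : Dec a c s := by
  refine ⟨h.1, ?_⟩
  intro q hq
  have hqs : q < s := by rw [Fin.lt_def]; omega
  have h1 : c q = a q := h.2 q hqs
  have h2 : a q < a s := ha hqs
  have h3 := h.1
  omega

lemma dec_update_mem {a c : Fin k → ℕ} (ha1 : ∀ t, 1 ≤ a t) (hc : memD1 u a c)
    {p : Fin k} (hd : Dec a c p) : memD1 u a (Function.update c p (c p - 1)) := by
  obtain ⟨hsm, h1, hu, hac⟩ := hc
  have hdp := hd.1
  refine ⟨?_, ?_, ?_, ?_⟩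
  · apply sm_adj
    intro q r hqr
    have hqr' : q < r := by rw [Fin.lt_def]; omega
    have hcs := hsm hqr'
    by_cases hrp : r = p
    · subst hrp
      rw [Function.update_self, Function.update_of_ne (by intro h; subst h; omega)]
      have := hd.2 q hqr
      omega
    · rw [Function.update_of_ne hrp]
      by_cases hqp : q = p
      · subst hqp; rw [Function.update_self]; omega
      · rw [Function.update_of_ne hqp]; exact hcs
  · intro t
    rcases eq_or_ne t p with rfl | h
    · rw [Function.update_self]
      have := ha1 t; omega
    · rw [Function.update_of_ne h]; exact h1 t
  · intro t
    rcases eq_or_ne t p with rfl | h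
    · rw [Function.update_self]; have := hu t; omega
    · rw [Function.update_of_ne h]; exact hu t
  · intro t
    rcases eq_or_ne t p with rfl | h
    · rw [Function.update_self]; omega
    · rw [Function.update_of_ne h]; exact hac t

lemma joinIrred_unique_dec {a c : Fin k → ℕ} (ha1 : ∀ t, 1 ≤ a t)
    (hJI : joinIrredD1 u a c) {p q : Fin k} (hp : Dec a c p) (hq : Dec a c q) : p = q := by
  by_contra hne
  obtain ⟨hc, -, hirr⟩ := hJI
  have hdp := dec_update_mem ha1 hc hp
  have hdq := dec_update_mem ha1 hc hq
  have h1p : 1 ≤ c p := hc.2.1 p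
  have h1q : 1 ≤ c q := hc.2.1 q
  have hsup : c = Function.update c p (c p - 1) ⊔ Function.update c q (c q - 1) := by
    funext t
    rw [Pi.sup_apply]
    rcases eq_or_ne t p with rfl | htp
    · rw [Function.update_self, Function.update_of_ne hne]
      omega
    · rw [Function.update_of_ne htp]
      rcases eq_or_ne t q with rfl | htq
      · rw [Function.update_self]; omega
      · rw [Function.update_of_ne htq]; omega
  rcases hirr _ _ hdp hdq hsup with h | h
  · have := congrFun h p
    rw [Function.update_self] at this
    omega
  · have := congrFun h q
    rw [Function.update_self] at this
    omega

end AuxP1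

namespace AuxP1
variable {k u : ℕ}

lemma joinIrred_of_unique_dec {a c : Fin k → ℕ} (hc : memD1 u a c)
    {s : Fin k} (hs : Dec a c s) (huniq : ∀ p, Dec a c p → p = s) :
    joinIrredD1 u a c := by
  classical
  refine ⟨hc, ?_, ?_⟩
  · intro h
    have := hs.1
    rw [h] at this
    omega
  · intro d e hd he hsup
    by_contra hne
    push_neg at hne
    obtain ⟨hned, hnee⟩ := hne
    have hceq : ∀ t, c t = max (d t) (e t) := by
      intro t
      have := congrFun hsup t
      rw [Pi.sup_apply] at this
      omega
    -- minimal index where d is below c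
    have hmind : ∀ (f : Fin k → ℕ), memD1 u a f → c ≠ f → (∀ t, f t ≤ c t) → f s < c s := by
      intro f hf hnef hfle
      set T : Finset (Fin k) := Finset.univ.filter (fun t : Fin k => f t < c t) with hTdef
      have hmemT : ∀ t : Fin k, t ∈ T ↔ f t < c t := by
        intro t; rw [hTdef, Finset.mem_filter]; simp
      have hT : T.Nonempty := by
        by_contra h
        apply hnef
        funext t
        have ht : ¬ f t < c t := fun hlt => h ⟨t, (hmemT t).mpr hlt⟩
        have := hfle t
        omega
      set j := T.min' hT with hj
      have hjmem : f j < c j := (hmemT _).mp (T.min'_mem hT)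
      have hdecj : Dec a c j := by
        constructor
        · have := hf.2.2.2 j
          omega
        · intro q hq
          have hqj : q < j := by rw [Fin.lt_def]; omega
          have hnm : ¬ f q < c q := by
            intro hlt
            exact absurd (T.min'_le q ((hmemT q).mpr hlt)) (not_le.mpr hqj)
          have h1 : f q < f j := hf.1 hqj
          have h2 := hfle q
          omega
      have := huniq j hdecj
      rw [← this]
      exact hjmem
    have hdle : ∀ t, d t ≤ c t := fun t => by have := hceq t; omega
    have hele : ∀ t, e t ≤ c t := fun t => by have := hceq t; omega
    have h1 := hmind d hd hned hdle
    have h2 := hmind e he hnee hele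
    have := hceq s
    omega

/-- For a join-irreducible `c` with minimal difference index `s`, every later entry
satisfies the cascade equation. -/
lemma cascade_eq {a c : Fin k → ℕ} (ha : StrictMono a) (ha1 : ∀ t, 1 ≤ a t)
    (hJI : joinIrredD1 u a c) {s : Fin k} (hmd : MinDiff a c s)
    {t t' : Fin k} (ht : (s : ℕ) < (t : ℕ)) (ht' : (t' : ℕ) + 1 = (t : ℕ)) :
    c t = max (a t) (c t' + 1) := by
  have hc := hJI.1
  have hnotdec : ¬ Dec a c t := by
    intro hdec
    have hsdec : Dec a c s := minDiff_dec ha hc.2.2.2 hmd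
    have := joinIrred_unique_dec ha1 hJI hdec hsdec
    rw [Fin.ext_iff] at this
    omega
  have hlow : a t ≤ c t := hc.2.2.2 t
  have hmono : c t' + 1 ≤ c t := by
    have : t' < t := by rw [Fin.lt_def]; omega
    exact hc.1 this
  rw [Dec] at hnotdec
  push_neg at hnotdec
  rcases Nat.lt_or_ge (a t) (c t) with hlt | hge
  · obtain ⟨q, hq1, hq2⟩ := hnotdec hlt
    have : q = t' := Fin.ext (by omega)
    rw [this] at hq2
    omega
  · omega

lemma cascade_le {a c : Fin k → ℕ} (ha : StrictMono a) (ha1 : ∀ t, 1 ≤ a t)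
    (hJI : joinIrredD1 u a c) {s : Fin k} (hmd : MinDiff a c s) :
    ∀ t : Fin k, (s : ℕ) ≤ (t : ℕ) → c t ≤ max (a t) (c s + ((t : ℕ) - (s : ℕ))) := by
  have key : ∀ d : ℕ, ∀ t : Fin k, (t : ℕ) = (s : ℕ) + d → c t ≤ max (a t) (c s + d) := by
    intro d
    induction d with
    | zero =>
      intro t htv
      have : t = s := Fin.ext (by omega)
      rw [this]; omega
    | succ d ih =>
      intro t htv
      have htpos : 0 < (t : ℕ) := by omega
      have hst : (s : ℕ) < (t : ℕ) := by omega
      have ht'lt : (t : ℕ) - 1 < k := by have := t.isLt; omega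
      set t' : Fin k := ⟨(t : ℕ) - 1, ht'lt⟩ with ht'def
      have ht' : (t' : ℕ) + 1 = (t : ℕ) := by simp [ht'def]; omega
      have hcas := cascade_eq ha ha1 hJI hmd hst ht'
      have hih := ih t' (by omega)
      have hat : a t' + 1 ≤ a t := by
        have : t' < t := by rw [Fin.lt_def]; omega
        exact ha this
      rw [hcas]
      omega
  intro t hts
  have := key ((t : ℕ) - (s : ℕ)) t (by omega)
  omega

/-- a join-irreducible is determined by its minimal-difference index and its value there -/
lemma joinIrred_determined {a c c' : Fin k → ℕ} (ha : StrictMono a) (ha1 : ∀ t, 1 ≤ a t)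
    (hJI : joinIrredD1 u a c) (hJI' : joinIrredD1 u a c') {s : Fin k}
    (hmd : MinDiff a c s) (hmd' : MinDiff a c' s) (hval : c s = c' s) : c = c' := by
  have key : ∀ d : ℕ, ∀ t : Fin k, (t : ℕ) = (s : ℕ) + d → c t = c' t := by
    intro d
    induction d with
    | zero =>
      intro t htv
      have : t = s := Fin.ext (by omega)
      rw [this]; exact hval
    | succ d ih =>
      intro t htv
      have htpos : 0 < (t : ℕ) := by omega
      have hst : (s : ℕ) < (t : ℕ) := by omega
      have ht'lt : (t : ℕ) - 1 < k := by have := t.isLt; omega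
      set t' : Fin k := ⟨(t : ℕ) - 1, ht'lt⟩ with ht'def
      have ht' : (t' : ℕ) + 1 = (t : ℕ) := by simp [ht'def]; omega
      have h1 := cascade_eq ha ha1 hJI hmd hst ht'
      have h2 := cascade_eq ha ha1 hJI' hmd' hst ht'
      have h3 := ih t' (by omega)
      rw [h1, h2, h3]
  funext t
  rcases Nat.lt_or_ge (t : ℕ) (s : ℕ) with h | h
  · have hlt : t < s := by rwa [Fin.lt_def]
    rw [hmd.2 t hlt, hmd'.2 t hlt]
  · exact key ((t : ℕ) - (s : ℕ)) t (by omega)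

/-- key step for the rank function φ(c) = c s - 2 s -/
lemma phi_step {a c c' : Fin k → ℕ} (ha : StrictMono a) (ha1 : ∀ t, 1 ≤ a t)
    (hJI : joinIrredD1 u a c) (hJI' : joinIrredD1 u a c') {s s' : Fin k}
    (hmd : MinDiff a c s) (hmd' : MinDiff a c' s')
    (hle : ∀ t, c t ≤ c' t) (hne : c ≠ c') :
    (c s : ℤ) - 2 * (s : ℕ) + 1 ≤ (c' s' : ℤ) - 2 * (s' : ℕ) := by
  have hss' : (s' : ℕ) ≤ (s : ℕ) := by
    by_contra h
    push_neg at h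
    have h1 : c' s = a s := hmd'.2 s (by rwa [Fin.lt_def])
    have h2 := hmd.1
    have h3 := hle s
    omega
  rcases Nat.eq_or_lt_of_le hss' with heq | hlt
  · have hseq : s' = s := Fin.ext heq
    rw [hseq] at hmd' ⊢
    have h1 : c s ≤ c' s := hle s
    have h2 : c s ≠ c' s := by
      intro h
      exact hne (joinIrred_determined ha ha1 hJI hJI' hmd hmd' h)
    omega
  · have hcas := cascade_le ha ha1 hJI' hmd' s (by omega)
    have h1 : c s ≤ c' s := hle s
    have h2 := hmd.1
    omega

end AuxP1


namespace AuxP1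
variable {k u : ℕ}

lemma update_memD1 {a : Fin k → ℕ} (ha : StrictMono a) (ha1 : ∀ t, 1 ≤ a t)
    (hau : ∀ t : Fin k, a t + k ≤ u + (t : ℕ) + 1) {i : Fin k} (hi : memL u a i) :
    memD1 u a (Function.update a i (a i + 1)) := by
  have hatu : ∀ t : Fin k, a t ≤ u := by
    intro t; have := hau t; have := t.isLt; omega
  refine ⟨?_, ?_, ?_, ?_⟩
  · apply sm_adj
    intro q r hqr
    have hqr' : q < r := by rw [Fin.lt_def]; omega
    have := ha hqr'
    rcases eq_or_ne r i with rfl | hri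
    · rw [Function.update_self, Function.update_of_ne (by intro h; subst h; omega)]
      omega
    · rw [Function.update_of_ne hri]
      rcases eq_or_ne q i with rfl | hqi
      · rw [Function.update_self]
        have hik : (q : ℕ) + 1 < k := by have := r.isLt; omega
        have h1 := hi.1
        rw [aNext, dif_pos hik] at h1
        have : (⟨(q : ℕ) + 1, hik⟩ : Fin k) = r := Fin.ext (by simp only [Fin.val_mk]; omega)
        rw [this] at h1
        omega
      · rw [Function.update_of_ne hqi]; omega
  · intro t
    rcases eq_or_ne t i with rfl | h
    · rw [Function.update_self]; have := ha1 t; omega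
    · rw [Function.update_of_ne h]; exact ha1 t
  · intro t
    rcases eq_or_ne t i with rfl | h
    · rw [Function.update_self]; have := hi.2; omega
    · rw [Function.update_of_ne h]; exact hatu t
  · intro t
    rcases eq_or_ne t i with rfl | h
    · rw [Function.update_self]; omega
    · rw [Function.update_of_ne h]

lemma update_ge {a : Fin k → ℕ} {i : Fin k} (t : Fin k) :
    a t ≤ Function.update a i (a i + 1) t := by
  rcases eq_or_ne t i with rfl | h
  · rw [Function.update_self]; omega
  · rw [Function.update_of_ne h]

lemma update_minDiff {a : Fin k → ℕ} {i : Fin k} :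
    MinDiff a (Function.update a i (a i + 1)) i := by
  constructor
  · rw [Function.update_self]; omega
  · intro t ht
    rw [Function.update_of_ne (Fin.ne_of_lt ht)]

lemma update_JI {a : Fin k → ℕ} (ha : StrictMono a) (ha1 : ∀ t, 1 ≤ a t)
    (hau : ∀ t : Fin k, a t + k ≤ u + (t : ℕ) + 1) {i : Fin k} (hi : memL u a i) :
    joinIrredD1 u a (Function.update a i (a i + 1)) := by
  apply joinIrred_of_unique_dec (update_memD1 ha ha1 hau hi)
    (minDiff_dec ha update_ge update_minDiff)
  intro p hp
  by_contra hne
  have := hp.1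
  rw [Function.update_of_ne hne] at this
  omega

lemma update_minimal {a : Fin k → ℕ} (ha : StrictMono a) {i : Fin k}
    {d : Fin k → ℕ} (hd : joinIrredD1 u a d) (hle : d ≤ Function.update a i (a i + 1)) :
    d = Function.update a i (a i + 1) := by
  obtain ⟨s, hs⟩ := exists_minDiff hd.1.2.2.2 hd.2.1
  have hsi : s = i := by
    by_contra hne
    have h1 : d s ≤ Function.update a i (a i + 1) s := hle s
    rw [Function.update_of_ne hne] at h1
    have := hs.1
    omega
  subst hsi
  funext t
  rcases eq_or_ne t s with rfl | h
  · have h1 : d t ≤ Function.update a t (a t + 1) t := hle t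
    rw [Function.update_self] at h1 ⊢
    have := hs.1
    omega
  · have h1 : d t ≤ Function.update a s (a s + 1) t := hle t
    rw [Function.update_of_ne h] at h1 ⊢
    have := hd.1.2.2.2 t
    omega

/-- Part 1 of the theorem -/
lemma part1 {a : Fin k → ℕ} (ha : StrictMono a) (ha1 : ∀ t, 1 ≤ a t)
    (hau : ∀ t : Fin k, a t + k ≤ u + (t : ℕ) + 1) (c : Fin k → ℕ) :
    (joinIrredD1 u a c ∧ ∀ d : Fin k → ℕ, joinIrredD1 u a d → d ≤ c → d = c) ↔
      ∃ i : Fin k, memL u a i ∧ c = Function.update a i (a i + 1) := by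
  classical
  constructor
  · rintro ⟨hJI, hmin⟩
    set T : Finset (Fin k) := Finset.univ.filter (fun t : Fin k => a t < c t) with hTdef
    have hmemT : ∀ t : Fin k, t ∈ T ↔ a t < c t := by
      intro t; rw [hTdef, Finset.mem_filter]; simp
    have hT : T.Nonempty := by
      by_contra h
      apply hJI.2.1
      funext t
      have ht : ¬ a t < c t := fun hlt => h ⟨t, (hmemT t).mpr hlt⟩
      have := hJI.1.2.2.2 t
      omega
    obtain ⟨l, hlmem, hlmax⟩ : ∃ l : Fin k, a l < c l ∧ ∀ r, a r < c r → r ≤ l :=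
      ⟨T.max' hT, (hmemT _).mp (T.max'_mem hT), fun r hr => T.le_max' r ((hmemT r).mpr hr)⟩
    have hclu : c l ≤ u := hJI.1.2.2.1 l
    have hml : memL u a l := by
      constructor
      · rw [aNext]
        split_ifs with h
        · set r : Fin k := ⟨(l : ℕ) + 1, h⟩ with hr
          have hrv : (r : ℕ) = (l : ℕ) + 1 := by simp [hr]
          have hrT : ¬ a r < c r := by
            intro hlt
            have hv : (r : ℕ) ≤ (l : ℕ) := hlmax r hlt
            omega
          have hcr : a r ≤ c r := hJI.1.2.2.2 r
          have hlr : c l < c r := hJI.1.1 (by rw [Fin.lt_def]; omega)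
          omega
        · omega
      · omega
    refine ⟨l, hml, ?_⟩
    have hle : Function.update a l (a l + 1) ≤ c := by
      rw [Pi.le_def]
      intro t
      rcases eq_or_ne t l with heq | h
      · rw [heq, Function.update_self]; omega
      · rw [Function.update_of_ne h]; exact hJI.1.2.2.2 t
    exact (hmin _ (update_JI ha ha1 hau hml) hle).symm
  · rintro ⟨i, hi, rfl⟩
    exact ⟨update_JI ha ha1 hau hi, fun d hd hle => update_minimal ha hd hle⟩

end AuxP1

namespace AuxP1
variable {k u : ℕ}

lemma aF1 {a : Fin k → ℕ} (ha : StrictMono a) (ha1 : ∀ t, 1 ≤ a t) (t : Fin k) :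
    (t : ℕ) + 1 ≤ a t := by
  have h0 : (0 : ℕ) < k := lt_of_le_of_lt (Nat.zero_le _) t.isLt
  have h1 := sm_le ha (p := ⟨0, h0⟩) (q := t) (by simp)
  have h2 := ha1 ⟨0, h0⟩
  simp only [Fin.val_mk] at h1
  omega

lemma aF5 {a : Fin k → ℕ} (ha : StrictMono a) {i : Fin k} (hi : memL u a i)
    (t : Fin k) (ht : (i : ℕ) < (t : ℕ)) : a i + 1 + ((t : ℕ) - (i : ℕ)) ≤ a t := by
  have hik : (i : ℕ) + 1 < k := by have := t.isLt; omega
  have h1 := hi.1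
  rw [aNext, dif_pos hik] at h1
  have h2 := sm_le ha (p := ⟨(i : ℕ) + 1, hik⟩) (q := t) (by simp only [Fin.val_mk]; omega)
  simp only [Fin.val_mk] at h2
  omega

/-- the `j`-th element of the canonical maximal chain above the minimal
join-irreducible attached to `i` -/
def gfun (a : Fin k → ℕ) (i : Fin k) (j : ℕ) : Fin k → ℕ := fun t =>
  if (t : ℕ) + j < (i : ℕ) then a t
  else max (a t) (a i + 1 + (t : ℕ) + j - ((i : ℕ) + min j (i : ℕ)))

lemma gfun_ge {a : Fin k → ℕ} {i : Fin k} {j : ℕ} (t : Fin k) : a t ≤ gfun a i j t := by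
  rw [gfun]
  split_ifs <;> omega

lemma gfun_memD1 {a : Fin k → ℕ} (ha : StrictMono a) (ha1 : ∀ t, 1 ≤ a t)
    (hau : ∀ t : Fin k, a t + k ≤ u + (t : ℕ) + 1) {i : Fin k} {j N : ℕ}
    (hN : N + k + a i = u + 2 * (i : ℕ)) (hNi : (i : ℕ) ≤ N) (hj : j ≤ N) :
    memD1 u a (gfun a i j) := by
  have hai := aF1 ha ha1 i
  refine ⟨?_, ?_, ?_, ?_⟩
  · apply sm_adj
    intro q r hqr
    have hqr' : a q < a r := ha (by rw [Fin.lt_def]; omega)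
    simp only [gfun]
    split_ifs <;> omega
  · intro t
    have := gfun_ge (a := a) (i := i) (j := j) t
    have := ha1 t
    omega
  · intro t
    have h1 := hau t
    have h2 := t.isLt
    have h3 := i.isLt
    rw [gfun]
    split_ifs
    · omega
    · omega
  · exact gfun_ge

lemma gfun_t0_lt {i : Fin k} {j : ℕ} : (i : ℕ) - min j (i : ℕ) < k :=
  lt_of_le_of_lt (Nat.sub_le _ _) i.isLt

lemma gfun_minDiff {a : Fin k → ℕ} (ha : StrictMono a) {i : Fin k} {j : ℕ} :
    MinDiff a (gfun a i j) ⟨(i : ℕ) - min j (i : ℕ), gfun_t0_lt⟩ := by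
  have ht0i := sm_le ha (p := ⟨(i : ℕ) - min j (i : ℕ), gfun_t0_lt⟩) (q := i)
    (by simp only [Fin.val_mk]; omega)
  simp only [Fin.val_mk] at ht0i
  constructor
  · simp only [gfun, Fin.val_mk]
    split_ifs <;> omega
  · intro t ht
    rw [Fin.lt_def] at ht
    simp only [Fin.val_mk] at ht
    rw [gfun, if_pos (by omega)]

lemma gfun_JI {a : Fin k → ℕ} (ha : StrictMono a) (ha1 : ∀ t, 1 ≤ a t)
    (hau : ∀ t : Fin k, a t + k ≤ u + (t : ℕ) + 1) {i : Fin k} {j N : ℕ}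
    (hN : N + k + a i = u + 2 * (i : ℕ)) (hNi : (i : ℕ) ≤ N) (hj : j ≤ N) :
    joinIrredD1 u a (gfun a i j) := by
  have hmem := gfun_memD1 ha ha1 hau hN hNi hj (i := i) (j := j)
  have hmd := gfun_minDiff (ha := ha) (i := i) (j := j)
  have hai := aF1 ha ha1 i
  apply joinIrred_of_unique_dec hmem (minDiff_dec ha hmem.2.2.2 hmd)
  intro p hp
  have hp1 := hp.1
  rcases lt_trichotomy ((p : ℕ)) ((i : ℕ) - min j (i : ℕ)) with hlt | heq | hgt
  · exfalso
    have := hmd.2 p (by rw [Fin.lt_def]; simp only [Fin.val_mk]; omega)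
    omega
  · exact Fin.ext (by simp only [Fin.val_mk]; omega)
  · exfalso
    have hppos : 0 < (p : ℕ) := by omega
    have hqlt : (p : ℕ) - 1 < k := by have := p.isLt; omega
    have h2 := hp.2 ⟨(p : ℕ) - 1, hqlt⟩ (by simp only [Fin.val_mk]; omega)
    have haq : a ⟨(p : ℕ) - 1, hqlt⟩ + 1 ≤ a p := ha (by rw [Fin.lt_def]; simp only [Fin.val_mk]; omega)
    simp only [gfun, Fin.val_mk] at h2 hp1
    split_ifs at h2 hp1 <;> omega

lemma gfun_zero {a : Fin k → ℕ} (ha : StrictMono a) (ha1 : ∀ t, 1 ≤ a t)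
    {i : Fin k} (hi : memL u a i) :
    gfun a i 0 = Function.update a i (a i + 1) := by
  have hai := aF1 ha ha1 i
  funext t
  rcases lt_trichotomy ((t : ℕ)) ((i : ℕ)) with hlt | heq | hgt
  · simp only [gfun]
    rw [if_pos (by omega), Function.update_of_ne (by intro h; rw [h] at hlt; omega)]
  · have : t = i := Fin.ext heq
    subst this
    simp only [gfun]
    rw [if_neg (by omega), Function.update_self]
    omega
  · have h5 := aF5 ha hi t (by omega)
    simp only [gfun]
    rw [if_neg (by omega), Function.update_of_ne (by intro h; rw [h] at hgt; omega)]
    omega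

lemma gfun_lt {a : Fin k → ℕ} (ha : StrictMono a) (ha1 : ∀ t, 1 ≤ a t) {i : Fin k} {j : ℕ} :
    gfun a i j < gfun a i (j + 1) := by
  have hai := aF1 ha ha1 i
  rw [lt_iff_le_and_ne]
  constructor
  · rw [Pi.le_def]
    intro t
    simp only [gfun]
    split_ifs <;> omega
  · intro heq
    by_cases hji : j < (i : ℕ)
    · have hwlt : (i : ℕ) - j - 1 < k := by have := i.isLt; omega
      have hw := congrFun heq ⟨(i : ℕ) - j - 1, hwlt⟩
      have hsm := sm_le ha (p := ⟨(i : ℕ) - j - 1, hwlt⟩) (q := i) (by simp only [Fin.val_mk]; omega)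
      simp only [Fin.val_mk] at hsm
      simp only [gfun, Fin.val_mk] at hw
      split_ifs at hw <;> omega
    · have hw := congrFun heq i
      simp only [gfun] at hw
      split_ifs at hw <;> omega

end AuxP1


/-- The minimal elements of `P₁` are exactly the tuples obtained from `(a₁,…,a_k)`
by replacing `a_l` by `a_l + 1` for `l` in `{i ≤ k : aᵢ + 1 < a_{i+1}, aᵢ < u}`
(with `a_{k+1} := u+1`); the coheight of the one attached to `l` is
`u - k - a_l + 2l - 2` (`l` being the 1-based index). -/
theorem minimal_elements_of_P1 {k u : ℕ} (a : Fin k → ℕ)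
    (hk : 1 ≤ k) (hku : k ≤ u) (ha : StrictMono a) (ha1 : ∀ i, 1 ≤ a i)
    (hau : ∀ i : Fin k, a i + k ≤ u + (i : ℕ) + 1) :
    (∀ c : Fin k → ℕ,
      (joinIrredD1 u a c ∧ ∀ d : Fin k → ℕ, joinIrredD1 u a d → d ≤ c → d = c) ↔
        ∃ i : Fin k, memL u a i ∧ c = Function.update a i (a i + 1)) ∧
    ∀ i : Fin k, memL u a i →
      (coheightP1 u a (Function.update a i (a i + 1)) : ℤ) =
        (u : ℤ) - k - a i + 2 * ((i : ℕ) + 1) - 2 := by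
  constructor
  · exact AuxP1.part1 ha ha1 hau
  · intro i hi
    have hik := i.isLt
    have hF3 : a i + k ≤ u + (i : ℕ) := by
      rcases Nat.lt_or_ge ((i : ℕ) + 1) k with h | h
      · have h1 := hi.1
        rw [aNext, dif_pos h] at h1
        have h2 := hau ⟨(i : ℕ) + 1, h⟩
        simp only [Fin.val_mk] at h2
        omega
      · have h2 := hi.2
        omega
    set N : ℕ := u + 2 * (i : ℕ) - (k + a i) with hNdef
    have hN : N + k + a i = u + 2 * (i : ℕ) := by omega
    have hNi : (i : ℕ) ≤ N := by omega
    have hmemN : N ∈ {m : ℕ | ∃ f : Fin (m + 1) → (Fin k → ℕ),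
        f 0 = Function.update a i (a i + 1) ∧ (∀ t, joinIrredD1 u a (f t)) ∧ StrictMono f} := by
      refine ⟨fun j => AuxP1.gfun a i (j : ℕ), ?_, ?_, ?_⟩
      · show AuxP1.gfun a i ((0 : Fin (N + 1)) : ℕ) = _
        rw [Fin.val_zero]
        exact AuxP1.gfun_zero ha ha1 hi
      · intro t
        exact AuxP1.gfun_JI ha ha1 hau hN hNi (by have := t.isLt; omega)
      · rw [Fin.strictMono_iff_lt_succ]
        intro t
        show AuxP1.gfun a i ((t.castSucc : Fin (N + 1)) : ℕ) < AuxP1.gfun a i ((t.succ : Fin (N + 1)) : ℕ)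
        rw [Fin.coe_castSucc, Fin.val_succ]
        exact AuxP1.gfun_lt ha ha1
    have hub : ∀ m ∈ {m : ℕ | ∃ f : Fin (m + 1) → (Fin k → ℕ),
        f 0 = Function.update a i (a i + 1) ∧ (∀ t, joinIrredD1 u a (f t)) ∧ StrictMono f},
        m ≤ N := by
      rintro m ⟨f, hf0, hfJI, hfsm⟩
      have key : ∀ t : ℕ, ∀ ht : t < m + 1, ∃ s : Fin k, AuxP1.MinDiff a (f ⟨t, ht⟩) s ∧
          (a i : ℤ) + 1 - 2 * (i : ℕ) + t ≤ (f ⟨t, ht⟩ s : ℤ) - 2 * (s : ℕ) := by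
        intro t
        induction t with
        | zero =>
          intro ht
          have h0 : (⟨0, ht⟩ : Fin (m + 1)) = 0 := Fin.ext (by simp)
          refine ⟨i, ?_, ?_⟩
          · rw [h0, hf0]; exact AuxP1.update_minDiff
          · rw [h0, hf0, Function.update_self]
            push_cast
            omega
        | succ t ih =>
          intro ht
          have ht' : t < m + 1 := by omega
          obtain ⟨s, hmd, hval⟩ := ih ht'
          have hJ1 := hfJI ⟨t, ht'⟩
          have hJ2 := hfJI ⟨t + 1, ht⟩
          have hlt : f ⟨t, ht'⟩ < f ⟨t + 1, ht⟩ := hfsm (by rw [Fin.lt_def]; simp)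
          obtain ⟨s', hmd'⟩ := AuxP1.exists_minDiff hJ2.1.2.2.2 hJ2.2.1
          have hle2 : f ⟨t, ht'⟩ ≤ f ⟨t + 1, ht⟩ := le_of_lt hlt
          have hle : ∀ r, f ⟨t, ht'⟩ r ≤ f ⟨t + 1, ht⟩ r := fun r => hle2 r
          have hne : f ⟨t, ht'⟩ ≠ f ⟨t + 1, ht⟩ := ne_of_lt hlt
          have hstep := AuxP1.phi_step ha ha1 hJ1 hJ2 hmd hmd' hle hne
          refine ⟨s', hmd', ?_⟩
          push_cast at hval hstep ⊢
          omega
      have hmlt : m < m + 1 := by omega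
      obtain ⟨s, hmd, hval⟩ := key m hmlt
      have hJm := hfJI ⟨m, hmlt⟩
      have hklt : k - 1 < k := by omega
      have hsk := s.isLt
      have htop := AuxP1.sm_le hJm.1.1 (p := s) (q := ⟨k - 1, hklt⟩)
        (by simp only [Fin.val_mk]; omega)
      simp only [Fin.val_mk] at htop
      have hu' := hJm.1.2.2.1 ⟨k - 1, hklt⟩
      omega
    have hco : coheightP1 u a (Function.update a i (a i + 1)) = N := by
      rw [coheightP1]
      exact le_antisymm (csSup_le ⟨N, hmemN⟩ hub) (le_csSup ⟨N, fun m hm => hub m hm⟩ hmemN)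
    rw [hco]
    push_cast
    omega
end

section
/- The rank of P₁ (the poset of join-irreducibles of D₁) equals the maximum over j = 1,…,v of u - k - a_{l_j} + 2 l_j - 2, where {l₁ < ⋯ < l_v} = {i ≤ k : a_i + 1 < a_{i+1}, a_i < u} (with a_{k+1} := u+1). -/
/-- The rank of the poset `P₁` of join-irreducible elements of `D₁`:
the length of its longest chain. -/
noncomputable def rankP1 {k : ℕ} (u : ℕ) (a : Fin k → ℕ) : ℕ :=
  sSup {m : ℕ | ∃ f : Fin (m + 1) → (Fin k → ℕ),
    (∀ t, joinIrredD1 u a (f t)) ∧ StrictMono f}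

/-!
A join-irreducible of `D₁` is the least tuple `leastAt a i b` of `D₁` with `i`-th entry at least
`b`, for some `a i < b`: a tuple of `D₁` that is not of this form can be lowered both at the first
entry where it exceeds `a` and at the first entry where it exceeds the corresponding `leastAt`, and is
the join of the two. One has `leastAt a i b ≤ leastAt a i' b'` iff `i' ≤ i` and `b - i ≤ b' - i'`,
so the potential `b - 2 i` strictly increases along a chain of join-irreducibles. It starts above
`a i - 2 i` and ends at most at `u - k + 1`, which bounds the length of a chain whose bottom lies in
row `i` by `u - k - a i + 2 i`; following the run of consecutive values of `a` from `i` to its end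
reaches an index of `L` with at least this bound. Conversely, climbing from row `i` to row `0` and
then raising `b` gives a chain of exactly that length.
-/

open Function

lemma StrictMono.add_sub_le_fin {n : ℕ} {f : Fin n → ℕ} (hf : StrictMono f) {p q : Fin n}
    (hpq : p ≤ q) : f p + (q - p : ℕ) ≤ f q := by
  obtain ⟨d, hd⟩ : ∃ d, (q : ℕ) = p + d := ⟨q - p, by omega⟩
  induction d generalizing q with
  | zero => rw [show q = p by omega]; simp
  | succ d ih =>
    have h₁ := ih (q := ⟨p + d, by omega⟩) (Fin.le_def.2 (by simp)) rfl
    have h₂ : f ⟨p + d, by omega⟩ < f q := hf (Fin.lt_def.2 (by simp; omega))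
    simp only at h₁
    omega

lemma exists_lt_forall_lt_eq_of_lt {ι α : Type*} [Preorder ι] [WellFoundedLT ι] [PartialOrder α]
    {f g : ι → α} (h : f < g) : ∃ p, f p < g p ∧ ∀ j < p, f j = g j := by
  obtain ⟨hle, p₀, hp₀⟩ := Pi.lt_def.1 h
  obtain ⟨p, hp, hmin⟩ := wellFounded_lt.has_min {p | f p < g p} ⟨p₀, hp₀⟩
  exact ⟨p, hp, fun j hj => (hle j).eq_of_not_lt fun hlt => hmin j hlt hj⟩

section

variable {k u : ℕ} {a : Fin k → ℕ}

lemma memD1_update_sub_one_s16 (ha1 : ∀ i, 1 ≤ a i) {c : Fin k → ℕ} (hc : memD1 u a c) {j : Fin k}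
    (hj : a j < c j) (hgap : ∀ p < j, c p + 1 < c j) :
    memD1 u a (update c j (c j - 1)) := by
  obtain ⟨hmono, hc1, hcu, hac⟩ := hc
  have hbetween (p : Fin k) : a p ≤ update c j (c j - 1) p ∧ update c j (c j - 1) p ≤ c p := by
    rcases eq_or_ne p j with rfl | hp
    · simp only [update_self]
      omega
    · simp only [update_of_ne hp, le_refl, and_true]
      exact hac p
  refine ⟨fun p q hpq => ?_, fun p => (ha1 p).trans (hbetween p).1,
    fun p => (hbetween p).2.trans (hcu p), fun p => (hbetween p).1⟩
  simp only [update_apply]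
  split_ifs with hp hq hq
  · subst hp hq; exact (lt_irrefl _ hpq).elim
  · subst hp; have := hmono hpq; omega
  · subst hq; have := hgap p hpq; omega
  · exact hmono hpq

/-- For `a i < b`, the least element of `D₁` whose `i`-th entry is at least `b`; these are
exactly the join-irreducibles of `D₁`. -/
def leastAt (a : Fin k → ℕ) (i : Fin k) (b : ℕ) : Fin k → ℕ :=
  fun j => if j < i then a j else max (a j) (b + (j - i : ℕ))

lemma leastAt_self {i : Fin k} {b : ℕ} (hb : a i < b) : leastAt a i b i = b := by
  simp only [leastAt, lt_irrefl, if_false]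
  omega

lemma leastAt_le {w : Fin k → ℕ} (hw : memD1 u a w) {i : Fin k} {b : ℕ} (hb : b ≤ w i) :
    leastAt a i b ≤ w := by
  intro j
  simp only [leastAt]
  split_ifs with hj
  · exact hw.2.2.2 j
  · have := hw.1.add_sub_le_fin (not_lt.1 hj)
    have := hw.2.2.2 j
    omega

lemma memD1_leastAt (ha : StrictMono a) (ha1 : ∀ i, 1 ≤ a i) (hau : ∀ i, a i ≤ u)
    {i : Fin k} {b : ℕ} (hbu : b + (k - 1 - i) ≤ u) : memD1 u a (leastAt a i b) := by
  refine ⟨fun p q hpq => ?_, fun p => ?_, fun p => ?_, fun p => ?_⟩ <;> simp only [leastAt]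
  · have := ha hpq
    split_ifs <;> omega
  all_goals have := ha1 p; have := hau p; split_ifs <;> omega

lemma joinIrredD1_leastAt (ha : StrictMono a) (ha1 : ∀ i, 1 ≤ a i) (hau : ∀ i, a i ≤ u)
    {i : Fin k} {b : ℕ} (hb : a i < b) (hbu : b + (k - 1 - i) ≤ u) :
    joinIrredD1 u a (leastAt a i b) := by
  refine ⟨memD1_leastAt ha ha1 hau hbu, fun h => ?_, fun d e hd he hde => ?_⟩
  · have := congrFun h i
    rw [leastAt_self hb] at this
    omega
  · have hi : max (d i) (e i) = b := by rw [← leastAt_self hb, hde]; rfl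
    rcases max_choice (d i) (e i) with h | h
    · left
      exact le_antisymm (leastAt_le hd (by omega)) (hde ▸ le_sup_left)
    · right
      exact le_antisymm (leastAt_le he (by omega)) (hde ▸ le_sup_right)

lemma eq_leastAt_of_joinIrredD1 (ha : StrictMono a) (ha1 : ∀ i, 1 ≤ a i) {c : Fin k → ℕ}
    (hc : joinIrredD1 u a c) :
    ∃ i b, a i < b ∧ b + (k - 1 - i) ≤ u ∧ c = leastAt a i b := by
  obtain ⟨hcD, hca, hirr⟩ := hc
  obtain ⟨i, hi, hmin⟩ := exists_lt_forall_lt_eq_of_lt (lt_of_le_of_ne hcD.2.2.2 (Ne.symm hca))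
  have hbu : c i + (k - 1 - i) ≤ u := by
    have hik : (i : ℕ) < k := i.isLt
    have := hcD.1.add_sub_le_fin (p := i) (q := ⟨k - 1, by omega⟩) (Fin.le_def.2 (by dsimp; omega))
    have := hcD.2.2.1 ⟨k - 1, by omega⟩
    dsimp only at *
    omega
  refine ⟨i, c i, hi, hbu, ?_⟩
  set z := leastAt a i (c i)
  have hzc : z ≤ c := leastAt_le hcD le_rfl
  by_contra hzc'
  obtain ⟨j, hj, hjmin⟩ := exists_lt_forall_lt_eq_of_lt (lt_of_le_of_ne hzc (Ne.symm hzc'))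
  have hzD : memD1 u a z :=
    memD1_leastAt ha ha1 (fun p => (hcD.2.2.2 p).trans (hcD.2.2.1 p)) hbu
  have hij : i < j := by
    by_contra! hji
    rcases hji.lt_or_eq with hji | rfl
    · have := hmin j hji
      simp only [z, leastAt, hji, if_true] at hj
      omega
    · exact hj.ne (leastAt_self hi)
  have hjz : a j ≤ z j := hzD.2.2.2 j
  have hd := memD1_update_sub_one_s16 ha1 hcD (hjz.trans_lt hj) fun p hp => by
    have := hjmin p hp
    have := hzD.1 hp
    omega
  have he := memD1_update_sub_one_s16 ha1 hcD hi fun p hp => by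
    have := hmin p hp
    have := ha hp
    omega
  have hsup : c = update c j (c j - 1) ⊔ update c i (c i - 1) := by
    funext p
    simp only [Pi.sup_apply, update_apply]
    split_ifs <;> subst_vars <;> omega
  rcases hirr _ _ hd he hsup with h | h
  · have := congrFun h j
    simp only [update_self] at this
    omega
  · have := congrFun h i
    simp only [update_self] at this
    omega

lemma joinIrredD1_iff (ha : StrictMono a) (ha1 : ∀ i, 1 ≤ a i) (hau : ∀ i, a i ≤ u)
    {c : Fin k → ℕ} :
    joinIrredD1 u a c ↔ ∃ i b, a i < b ∧ b + (k - 1 - i) ≤ u ∧ c = leastAt a i b :=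
  ⟨eq_leastAt_of_joinIrredD1 ha ha1, by
    rintro ⟨i, b, hb, hbu, rfl⟩
    exact joinIrredD1_leastAt ha ha1 hau hb hbu⟩

lemma leastAt_le_leastAt_iff {i i' : Fin k} {b b' : ℕ} (hb : a i < b) :
    leastAt a i b ≤ leastAt a i' b' ↔ i' ≤ i ∧ b + i' ≤ b' + i := by
  constructor
  · intro h
    have := h i
    rw [leastAt_self hb] at this
    simp only [leastAt] at this
    split_ifs at this <;> omega
  · rintro ⟨hi, hb'⟩ j
    simp only [leastAt]
    split_ifs <;> omega

lemma leastAt_lt_leastAt {i i' : Fin k} {b b' : ℕ} (hb : a i < b) (hb' : a i' < b')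
    (h : leastAt a i b < leastAt a i' b') :
    -- the potential `b - 2 * i`, shifted by `2 * k` to stay in `ℕ`
    b + 2 * (k - i) < b' + 2 * (k - i') := by
  rw [lt_iff_le_not_ge, leastAt_le_leastAt_iff hb, leastAt_le_leastAt_iff hb'] at h
  omega

def chainBound (u : ℕ) (a : Fin k → ℕ) (i : Fin k) : ℕ :=
  u + 2 * i - k - a i

lemma exists_chain (ha : StrictMono a) (ha1 : ∀ i, 1 ≤ a i) (hau : ∀ i, a i ≤ u) {i : Fin k}
    (hi : a i + k ≤ u + i) :
    ∃ f : Fin (chainBound u a i + 1) → (Fin k → ℕ), (∀ t, joinIrredD1 u a (f t)) ∧ StrictMono f := by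
  -- Climb from row `i` to row `0` lowering `b` by one per row, then raise `b` in row `0`; each
  -- step raises the potential `b - 2 * row` by one.
  have hgrowth (t : ℕ) : a ⟨i - t, by omega⟩ + min t i ≤ a i := by
    have := ha.add_sub_le_fin (p := ⟨i - t, by omega⟩) (q := i) (Fin.le_def.2 (by dsimp only; omega))
    dsimp only at this
    omega
  refine ⟨fun t => leastAt a ⟨i - t, by omega⟩ (a i + 1 + ((t : ℕ) - i) - min (t : ℕ) i),
    fun t => ?_, fun p q hpq => ?_⟩
  · have := hgrowth t
    have := t.isLt
    refine (joinIrredD1_iff ha ha1 hau).2 ⟨_, _, ?_, ?_, rfl⟩ <;> simp only [chainBound] at * <;> omega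
  · have := hgrowth p
    have := hgrowth q
    have : (p : ℕ) < q := hpq
    rw [lt_iff_le_not_ge, leastAt_le_leastAt_iff (by omega), leastAt_le_leastAt_iff (by omega),
      Fin.le_def, Fin.le_def]
    dsimp only
    omega

lemma exists_memL_ge (ha : StrictMono a) {i : Fin k} (hi : a i + k ≤ u + i) :
    ∃ j, memL u a j ∧ a j + 2 * i ≤ a i + 2 * j := by
  classical
  -- The last `j` up to which `a` runs consecutively from `i` is followed by a gap.
  obtain ⟨j, hjS, hjmax⟩ := (Finset.univ.filter fun j : Fin k => i ≤ j ∧ a j + i = a i + j)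
    |>.exists_max_image (fun j => (j : ℕ)) ⟨i, by simp⟩
  simp only [Finset.mem_filter, Finset.mem_univ, true_and] at hjS hjmax
  obtain ⟨hij, hj⟩ := hjS
  have := j.isLt
  refine ⟨j, ⟨?_, by omega⟩, by omega⟩
  unfold aNext
  split_ifs with hjk
  · have := ha (show j < ⟨j + 1, hjk⟩ from Fin.lt_def.2 (by dsimp only; omega))
    by_contra hgap
    have := hjmax ⟨j + 1, hjk⟩ ⟨Fin.le_def.2 (by dsimp only; omega), by dsimp only; omega⟩
    dsimp only at this
    omega
  · omega

lemma add_le_of_memL (hau : ∀ i : Fin k, a i + k ≤ u + i + 1) {i : Fin k} (hi : memL u a i) :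
    a i + k ≤ u + i := by
  obtain ⟨hgap, hiu⟩ := hi
  unfold aNext at hgap
  split_ifs at hgap with h
  · have := hau ⟨i + 1, h⟩
    dsimp only at this
    omega
  · omega

lemma exists_memL_of_chain (ha : StrictMono a) (ha1 : ∀ i, 1 ≤ a i) (hau : ∀ i, a i ≤ u) {m : ℕ}
    {f : Fin (m + 1) → (Fin k → ℕ)} (hf : ∀ t, joinIrredD1 u a (f t)) (hmono : StrictMono f) :
    ∃ j, memL u a j ∧ m ≤ chainBound u a j := by
  choose I B hB hBu hfI using fun t => (joinIrredD1_iff ha ha1 hau).1 (hf t)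
  have hpot : StrictMono fun t => B t + 2 * (k - I t) := fun p q hpq => by
    have := hmono hpq
    rw [hfI p, hfI q] at this
    exact leastAt_lt_leastAt (hB p) (hB q) this
  have hrise := hpot.add_sub_le_fin (Fin.zero_le (Fin.last m))
  have := hB 0
  have := hBu 0
  have := hBu (Fin.last m)
  have := (I 0).isLt
  have := (I (Fin.last m)).isLt
  obtain ⟨j, hjL, hjI⟩ := exists_memL_ge (u := u) ha (i := I 0) (by omega)
  refine ⟨j, hjL, ?_⟩
  simp only [chainBound, Fin.val_last, Fin.val_zero] at *
  omega

end

theorem rankP1_eq_max_general {k u : ℕ} (a : Fin k → ℕ)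
    (ha : StrictMono a) (ha1 : ∀ i, 1 ≤ a i)
    (hau : ∀ i : Fin k, a i + k ≤ u + (i : ℕ) + 1)
    (hL : ∃ i : Fin k, memL u a i) :
    IsGreatest {z : ℤ | ∃ i : Fin k, memL u a i ∧
        z = (u : ℤ) - k - a i + 2 * ((i : ℕ) + 1) - 2}
      ((rankP1 u a : ℕ) : ℤ) := by
  classical
  have hle_u (i : Fin k) : a i ≤ u := by have := hau i; have := i.isLt; omega
  obtain ⟨i₀, hi₀, hmax⟩ := (Finset.univ.filter (memL u a)).exists_max_image (chainBound u a)
    (Finset.filter_nonempty_iff.2 (by simpa using hL))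
  simp only [Finset.mem_filter, Finset.mem_univ, true_and] at hi₀ hmax
  have hrank : rankP1 u a = chainBound u a i₀ := IsGreatest.csSup_eq
    ⟨exists_chain ha ha1 hle_u (add_le_of_memL hau hi₀), fun m ⟨_, hf, hmono⟩ => by
      obtain ⟨j, hj, hm⟩ := exists_memL_of_chain ha ha1 hle_u hf hmono
      exact hm.trans (hmax j hj)⟩
  have := add_le_of_memL hau hi₀
  refine ⟨⟨i₀, hi₀, ?_⟩, ?_⟩
  · rw [hrank, chainBound]
    omega
  · rintro z ⟨i, hi, rfl⟩
    have := hmax i hi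
    have := add_le_of_memL hau hi
    rw [hrank]
    simp only [chainBound] at *
    omega

/-- The rank of `P₁` is the maximum of `u - k - a_l + 2l - 2` over the (1-based)
indices `l` in `{i ≤ k : aᵢ + 1 < a_{i+1}, aᵢ < u}` (with `a_{k+1} := u+1`). -/
theorem rankP1_eq_max {k u : ℕ} (a : Fin k → ℕ)
    (hk : 1 ≤ k) (hku : k ≤ u) (ha : StrictMono a) (ha1 : ∀ i, 1 ≤ a i)
    (hau : ∀ i : Fin k, a i + k ≤ u + (i : ℕ) + 1)
    (hL : ∃ i : Fin k, memL u a i) :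
    IsGreatest {z : ℤ | ∃ i : Fin k, memL u a i ∧
        z = (u : ℤ) - k - a i + 2 * ((i : ℕ) + 1) - 2}
      ((rankP1 u a : ℕ) : ℤ) :=
  rankP1_eq_max_general a ha ha1 hau hL
end
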